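/- arXiv:2604.15974 — 6 statements merged into one kernel-verified Lean document; each statement's English description precedes it below -/
import Mathlib

section
/- Let α > 0 and let f be analytic on the unit disk with f(0) = 0, f'(0) = 1, such that Re[(f(z)/z)^{α-1} f'(z)] > 0 for all z in the unit disk (principal branch, with (f(z)/z)^{α-1} well-defined and nonvanishing). Write ψ(z) = (f(z)/z)^α = 1 + Σ_{n≥1} A_n z^n. Then for every n ≥ 1, |A_n| ≤ 2α/(n+α). -/
open Complex Metric Real ComplexConjugate Filter Topology

/-! The function `p = ψ + z ψ' / α` equals `(f/z)^(α-1) f'`: differentiating `ψ = (f/z)^α` is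
legitimate near `0`, where `f(z)/z` stays in the slit plane, and the resulting identity
`z ψ' f = α ψ (z f' - f)` between analytic functions extends to the whole disk. Hence `p(0) = 1`
and `Re p > 0`, while the `n`-th Taylor coefficient of `p` is `(1 + n/α) A_n`.

Carathéodory's bound `|p_n| ≤ 2 Re p(0)` then gives the claim. It comes from the Cauchy formula
`p_n rⁿ = avg_{|z|=r} (r/z)ⁿ p(z)`: the average of `(r/z)ⁿ conj p(z)` is the conjugate of the
mean of the holomorphic function `zⁿ p(z)`, hence `0`, so `p` may be replaced by `2 Re p ≥ 0`,
whose mean is `2 Re p(0)`. -/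

theorem norm_circleAverage_le_circleAverage_norm {E : Type*} [NormedAddCommGroup E]
    [NormedSpace ℝ E] (f : ℂ → E) (c : ℂ) (R : ℝ) :
    ‖circleAverage f c R‖ ≤ circleAverage (‖f ·‖) c R := by
  rw [circleAverage_def, circleAverage_def, norm_smul, smul_eq_mul,
    Real.norm_of_nonneg (by positivity)]
  gcongr
  exact intervalIntegral.norm_integral_le_integral_norm two_pi_pos.le

section Caratheodory

variable {p : ℂ → ℂ} {r : ℝ}

theorem DifferentiableOn.circleAverage_eq (hr : 0 < r)
    (hp : DifferentiableOn ℂ p (closedBall 0 r)) : circleAverage p 0 r = p 0 :=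
  ((hp.mono closure_ball_subset_closedBall).diffContOnCl.mono
    (by rw [abs_of_pos hr])).circleAverage

theorem iteratedDeriv_div_factorial_eq_circleAverage (hr : 0 < r)
    (hp : DifferentiableOn ℂ p (closedBall 0 r)) (n : ℕ) :
    iteratedDeriv n p 0 / n.factorial = circleAverage (fun z ↦ (z ^ n)⁻¹ * p z) 0 r := by
  have hcauchy := hp.circleIntegral_one_div_sub_center_pow_smul hr n
  have hint : (fun z : ℂ ↦ (z - 0)⁻¹ • ((z ^ n)⁻¹ * p z)) =
      fun z ↦ (1 / (z - 0) ^ (n + 1)) • p z := by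
    ext z
    simp only [sub_zero, smul_eq_mul, pow_succ', one_div, mul_inv]
    ring
  rw [circleAverage_eq_circleIntegral hr.ne', hint, hcauchy, smul_smul, smul_eq_mul]
  field_simp [two_pi_I_ne_zero]

theorem circleAverage_inv_pow_mul_conj_eq_zero (hr : 0 < r)
    (hp : DifferentiableOn ℂ p (closedBall 0 r)) {n : ℕ} (hn : n ≠ 0) :
    circleAverage (fun z ↦ (z ^ n)⁻¹ * conj (p z)) 0 r = 0 := by
  have hq : DifferentiableOn ℂ (fun z ↦ z ^ n * p z) (closedBall 0 r) :=
    (differentiableOn_id.pow n).mul hp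
  have hmean : circleAverage (fun z ↦ z ^ n * p z) 0 r = 0 := by
    simp [hq.circleAverage_eq hr, hn]
  have hconj_comm := (conjCLE : ℂ →L[ℝ] ℂ).circleAverage_comp_comm
    ((hq.continuousOn.mono sphere_subset_closedBall).circleIntegrable hr.le)
  have hsphere : Set.EqOn (fun z ↦ (z ^ n)⁻¹ * conj (p z))
      (fun z ↦ ((r ^ (2 * n))⁻¹ : ℝ) • ((conjCLE : ℂ →L[ℝ] ℂ) ∘ fun z ↦ z ^ n * p z) z)
      (sphere 0 |r|) := by
    intro z hz
    have hnorm : ‖z‖ = r := by simpa [abs_of_pos hr] using hz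
    have hz0 : z ≠ 0 := norm_ne_zero_iff.1 (hnorm ▸ hr.ne')
    have hconj : conj z = (r : ℂ) ^ 2 / z := by
      rw [eq_div_iff hz0, mul_comm, mul_conj, normSq_eq_norm_sq, hnorm]; push_cast; rfl
    simp only [Function.comp_apply, ContinuousLinearEquiv.coe_coe, conjCLE_apply, map_mul,
      map_pow, hconj, real_smul]
    have hr0 : (r : ℂ) ≠ 0 := ofReal_ne_zero.2 hr.ne'
    push_cast
    rw [div_pow, ← pow_mul]
    field_simp
  rw [circleAverage_congr_sphere hsphere, circleAverage_fun_smul, hconj_comm, hmean, map_zero,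
    smul_zero]

theorem norm_iteratedDeriv_div_factorial_mul_pow_le (hr : 0 < r)
    (hp : DifferentiableOn ℂ p (closedBall 0 r)) (hre : ∀ z ∈ sphere 0 r, 0 ≤ (p z).re)
    {n : ℕ} (hn : n ≠ 0) :
    ‖iteratedDeriv n p 0 / n.factorial‖ * r ^ n ≤ 2 * (p 0).re := by
  have hcont : ContinuousOn p (sphere 0 r) := hp.continuousOn.mono sphere_subset_closedBall
  have hinv : ContinuousOn (fun z : ℂ ↦ (z ^ n)⁻¹) (sphere 0 r) :=
    (continuousOn_id.pow n).inv₀ fun z hz ↦ pow_ne_zero n (ne_of_mem_sphere hz hr.ne')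
  have hre_avg : circleAverage (fun z ↦ (p z).re) 0 r = (p 0).re := by
    rw [← hp.circleAverage_eq hr]
    exact reCLM.circleAverage_comp_comm (hcont.circleIntegrable hr.le)
  have hcoeff : iteratedDeriv n p 0 / n.factorial =
      circleAverage (fun z ↦ (z ^ n)⁻¹ * ((2 * (p z).re : ℝ) : ℂ)) 0 r := by
    have hsum := circleAverage_fun_add (f₁ := fun z ↦ (z ^ n)⁻¹ * p z)
      (f₂ := fun z ↦ (z ^ n)⁻¹ * conj (p z)) ((hinv.mul hcont).circleIntegrable hr.le)
      ((hinv.mul (continuous_conj.comp_continuousOn hcont)).circleIntegrable hr.le)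
    rw [circleAverage_inv_pow_mul_conj_eq_zero hr hp hn, add_zero] at hsum
    rw [iteratedDeriv_div_factorial_eq_circleAverage hr hp, ← hsum]
    simp only [← mul_add, add_conj]
  have hsphere : Set.EqOn (fun z ↦ ‖(z ^ n)⁻¹ * ((2 * (p z).re : ℝ) : ℂ)‖)
      (fun z ↦ (r ^ n)⁻¹ * 2 * (p z).re) (sphere 0 |r|) := by
    intro z hz
    rw [abs_of_pos hr] at hz
    simp [norm_inv, norm_pow, mem_sphere_zero_iff_norm.1 hz, abs_of_nonneg (hre z hz), mul_assoc]
  calc ‖iteratedDeriv n p 0 / n.factorial‖ * r ^ n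
      ≤ circleAverage (fun z ↦ (r ^ n)⁻¹ * 2 * (p z).re) 0 r * r ^ n := by
        gcongr
        rw [hcoeff, ← circleAverage_congr_sphere hsphere]
        exact norm_circleAverage_le_circleAverage_norm _ _ _
    _ = 2 * (p 0).re := by
        have hscale := circleAverage_fun_smul (a := (r ^ n)⁻¹ * 2) (f := fun z ↦ (p z).re)
          (c := 0) (R := r)
        simp only [smul_eq_mul, hre_avg] at hscale
        rw [hscale]
        field_simp

theorem norm_iteratedDeriv_div_factorial_le (hp : DifferentiableOn ℂ p (ball 0 1))
    (hre : ∀ z ∈ ball 0 1, 0 ≤ (p z).re) {n : ℕ} (hn : n ≠ 0) :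
    ‖iteratedDeriv n p 0 / n.factorial‖ ≤ 2 * (p 0).re := by
  have hlim : Tendsto (fun r : ℝ ↦ ‖iteratedDeriv n p 0 / n.factorial‖ * r ^ n) (𝓝[<] 1)
      (𝓝 ‖iteratedDeriv n p 0 / n.factorial‖) := by
    simpa using ((continuous_pow n).const_mul _).continuousWithinAt.tendsto (x := (1 : ℝ))
  refine le_of_tendsto hlim ?_
  filter_upwards [Ioo_mem_nhdsLT one_pos] with r ⟨hr0, hr1⟩
  exact norm_iteratedDeriv_div_factorial_mul_pow_le hr0 (hp.mono (closedBall_subset_ball hr1))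
    (fun z hz ↦ hre z (sphere_subset_closedBall.trans (closedBall_subset_ball hr1) hz)) hn

end Caratheodory

noncomputable def eulerShift (a : ℂ) (ψ : ℂ → ℂ) (z : ℂ) : ℂ := ψ z + a⁻¹ * (z * deriv ψ z)

theorem AnalyticOnNhd.eulerShift {ψ : ℂ → ℂ} {s : Set ℂ} (hψ : AnalyticOnNhd ℂ ψ s) (a : ℂ) :
    AnalyticOnNhd ℂ (eulerShift a ψ) s :=
  hψ.add (analyticOnNhd_const.mul (analyticOnNhd_id.mul hψ.deriv))

theorem iteratedDeriv_id_mul_deriv_zero {𝕜 : Type*} [NontriviallyNormedField 𝕜] {g : 𝕜 → 𝕜}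
    {n : ℕ} (hg : ContDiffAt 𝕜 n (deriv g) 0) :
    iteratedDeriv n (fun w ↦ w * deriv g w) 0 = n * iteratedDeriv n g 0 := by
  rw [iteratedDeriv_fun_mul (f := fun w ↦ w) contDiffAt_fun_id hg]
  rcases n with _ | n
  · simp
  · rw [Finset.sum_eq_single 1]
    · simp [iteratedDeriv_fun_id_zero, iteratedDeriv_succ']
    · intro i _ hi
      simp [iteratedDeriv_fun_id_zero, hi]
    · simp

theorem iteratedDeriv_eulerShift_zero {ψ : ℂ → ℂ} (hψ : AnalyticAt ℂ ψ 0) (a : ℂ) (n : ℕ) :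
    iteratedDeriv n (eulerShift a ψ) 0 = (1 + n * a⁻¹) * iteratedDeriv n ψ 0 := by
  have hθ : ContDiffAt ℂ n (fun w ↦ w * deriv ψ w) 0 :=
    contDiffAt_id.mul hψ.deriv.contDiffAt
  unfold eulerShift
  rw [iteratedDeriv_fun_add hψ.contDiffAt (contDiffAt_const.mul hθ),
    iteratedDeriv_const_mul _ hθ, iteratedDeriv_id_mul_deriv_zero hψ.deriv.contDiffAt]
  ring

theorem deriv_mul_eq_of_eventuallyEq_cpow {g ψ : ℂ → ℂ} {z g' a : ℂ} (hg : HasDerivAt g g' z)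
    (hslit : g z ∈ slitPlane) (hψ : ψ =ᶠ[𝓝 z] fun w ↦ g w ^ a) :
    deriv ψ z * g z = a * ψ z * g' := by
  have hg0 : g z ≠ 0 := slitPlane_ne_zero hslit
  rw [hψ.deriv_eq, (hg.cpow_const hslit).deriv, hψ.eq_of_nhds, cpow_sub _ _ hg0, cpow_one]
  field_simp

theorem eventually_div_self_mem_slitPlane {f : ℂ → ℂ} (hf0 : f 0 = 0) (hf : HasDerivAt f 1 0) :
    ∀ᶠ z in 𝓝[≠] 0, f z / z ∈ slitPlane := by
  have hslope := hasDerivAt_iff_tendsto_slope.1 hf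
  filter_upwards [hslope (isOpen_slitPlane.mem_nhds one_mem_slitPlane)] with z hz
  simpa [slope_def_field, hf0] using hz

theorem mul_deriv_mul_eqOn_of_eqOn_cpow {f ψ : ℂ → ℂ} {a : ℂ}
    (hf : AnalyticOnNhd ℂ f (ball 0 1)) (hψ : AnalyticOnNhd ℂ ψ (ball 0 1))
    (hf0 : f 0 = 0) (hf'0 : deriv f 0 = 1)
    (hψf : ∀ z ∈ ball (0 : ℂ) 1, z ≠ 0 → ψ z = (f z / z) ^ a) :
    Set.EqOn (fun z ↦ z * deriv ψ z * f z) (fun z ↦ a * ψ z * (z * deriv f z - f z))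
      (ball 0 1) := by
  have hf0' : HasDerivAt f 1 0 := hf'0 ▸ (hf 0 (mem_ball_self one_pos)).differentiableAt.hasDerivAt
  refine (((analyticOnNhd_id.mul hψ.deriv).mul hf)).eqOn_of_preconnected_of_frequently_eq
    ((analyticOnNhd_const.mul hψ).mul ((analyticOnNhd_id.mul hf.deriv).sub hf))
    (convex_ball 0 1).isPreconnected (mem_ball_self one_pos) (Eventually.frequently ?_)
  filter_upwards [eventually_div_self_mem_slitPlane hf0 hf0',
    self_mem_nhdsWithin, nhdsWithin_le_nhds (ball_mem_nhds 0 one_pos)] with z hslit (hz0 : z ≠ 0) hz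
  have hfz : HasDerivAt f (deriv f z) z := (hf z hz).differentiableAt.hasDerivAt
  have hψz : ψ =ᶠ[𝓝 z] fun w ↦ (f w / w) ^ a := by
    filter_upwards [isOpen_ball.mem_nhds hz, isOpen_ne.mem_nhds hz0] with w hw hw0
    exact hψf w hw hw0
  have key := deriv_mul_eq_of_eventuallyEq_cpow (hfz.div (hasDerivAt_id z) hz0) hslit hψz
  simp only [Pi.div_apply, id, mul_one] at key
  field_simp at key
  linear_combination key

theorem eulerShift_eq_cpow_sub_one_mul_deriv {f ψ : ℂ → ℂ} {a : ℂ} (ha : a ≠ 0)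
    (hf : AnalyticOnNhd ℂ f (ball 0 1)) (hψ : AnalyticOnNhd ℂ ψ (ball 0 1))
    (hf0 : f 0 = 0) (hf'0 : deriv f 0 = 1)
    (hψf : ∀ z ∈ ball (0 : ℂ) 1, z ≠ 0 → ψ z = (f z / z) ^ a)
    {z : ℂ} (hz : z ∈ ball 0 1) (hz0 : z ≠ 0) (hfz : f z / z ≠ 0) :
    eulerShift a ψ z = (f z / z) ^ (a - 1) * deriv f z := by
  have hident := mul_deriv_mul_eqOn_of_eqOn_cpow hf hψ hf0 hf'0 hψf hz
  have hfz0 : f z ≠ 0 := by rintro h; simp [h] at hfz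
  rw [cpow_sub _ _ hfz, cpow_one, ← hψf z hz hz0, eulerShift]
  field_simp
  linear_combination hident

/-- If `f ∈ B₁(α)`, i.e. `f` is analytic on the unit disk, normalized, with
`Re[(f(z)/z)^(α-1) f'(z)] > 0`, and `ψ(z) = (f(z)/z)^α`, then the Taylor coefficients `A n`
of `ψ` satisfy `|A n| ≤ 2α/(n+α)` for `n ≥ 1`. -/
theorem bazilevic_coeff_bound
    (α : ℝ) (hα : 0 < α)
    (f ψ : ℂ → ℂ)
    (hf : AnalyticOn ℂ f (ball 0 1))
    (hf0 : f 0 = 0) (hf'0 : deriv f 0 = 1)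
    (hfz : ∀ z ∈ ball (0:ℂ) 1, z ≠ 0 → f z / z ≠ 0)
    (hRe : ∀ z ∈ ball (0:ℂ) 1, z ≠ 0 →
      0 < (((f z / z) ^ ((α : ℂ) - 1)) * deriv f z).re)
    (hψ : AnalyticOn ℂ ψ (ball 0 1))
    (hψ0 : ψ 0 = 1)
    (hψf : ∀ z ∈ ball (0:ℂ) 1, z ≠ 0 → ψ z = (f z / z) ^ (α : ℂ)) :
    ∀ n : ℕ, 1 ≤ n → ‖iteratedDeriv n ψ 0 / (n.factorial : ℂ)‖ ≤ 2 * α / (n + α) := by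
  intro n hn
  have hfN := isOpen_ball.analyticOn_iff_analyticOnNhd.1 hf
  have hψN := isOpen_ball.analyticOn_iff_analyticOnNhd.1 hψ
  have hp0 : eulerShift α ψ 0 = 1 := by simp [eulerShift, hψ0]
  have hre : ∀ z ∈ ball (0 : ℂ) 1, 0 ≤ (eulerShift α ψ z).re := by
    intro z hz
    rcases eq_or_ne z 0 with rfl | hz0
    · simp [hp0]
    · rw [eulerShift_eq_cpow_sub_one_mul_deriv (ofReal_ne_zero.2 hα.ne') hfN hψN hf0 hf'0 hψf hz
        hz0 (hfz z hz hz0)]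
      exact (hRe z hz hz0).le
  have hcar := norm_iteratedDeriv_div_factorial_le (hψN.eulerShift α).differentiableOn hre
    (Nat.one_le_iff_ne_zero.1 hn)
  have hscale : ‖1 + (n : ℂ) * (α : ℂ)⁻¹‖ = (n + α) / α := by
    have hreal : 1 + (n : ℂ) * (α : ℂ)⁻¹ = ((n + α) / α : ℝ) := by
      push_cast
      field_simp [ofReal_ne_zero.2 hα.ne']
      ring
    rw [hreal, norm_real, norm_of_nonneg (by positivity)]
  rw [iteratedDeriv_eulerShift_zero (hψN 0 (mem_ball_self one_pos)), mul_div_assoc, norm_mul,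
    hscale, hp0, one_re, div_mul_eq_mul_div, div_le_iff₀ hα] at hcar
  rw [le_div_iff₀ (by positivity)]
  linarith
end

section
/- For α > 0 the bound |A_n| ≤ 2α/(n+α) is sharp: the function G(z) = 1 + Σ_{n≥1} (2α/(n+α)) z^n is analytic on the unit disk and satisfies z G'(z) + α G(z) = α (1+z)/(1-z), where (1+z)/(1-z) has positive real part on the unit disk. -/
open Complex Metric

lemma sharp_norm_term1 (x : ℝ) (y : ℂ) (n : ℕ) :
    ‖((x : ℂ)) * ((n : ℂ) + 1) * y ^ n‖ = |x| * (n + 1) * ‖y‖ ^ n := by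
  have h1 : ((n : ℂ) + 1) = ((n + 1 : ℕ) : ℂ) := by push_cast; ring
  rw [norm_mul, norm_mul, norm_pow, h1, Complex.norm_natCast, Complex.norm_real,
    Real.norm_eq_abs]
  push_cast
  ring

lemma sharp_norm_term2 (x : ℝ) (y : ℂ) (n : ℕ) :
    ‖((x : ℂ)) * y ^ (n + 1)‖ = |x| * (‖y‖ ^ n * ‖y‖) := by
  rw [norm_mul, norm_pow, Complex.norm_real, Real.norm_eq_abs, pow_succ]

lemma sharp_coef_abs (α : ℝ) (hα : 0 < α) (n : ℕ) :
    |(2 * α / ((n + 1) + α) : ℝ)| = 2 * α / ((n + 1) + α) :=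
  abs_of_pos (by positivity)

lemma sharp_coef_bound (α : ℝ) (hα : 0 < α) (n : ℕ) :
    (2 * α / ((n + 1) + α)) * ((n : ℝ) + 1) ≤ 2 * α := by
  have h1 : (0:ℝ) < (n + 1) + α := by positivity
  rw [div_mul_eq_mul_div, div_le_iff₀ h1]
  nlinarith

lemma sharp_summable1 (α : ℝ) (hα : 0 < α) {z : ℂ} (hz : ‖z‖ < 1) :
    Summable fun n : ℕ => ((2 * α / ((n + 1) + α) : ℝ) : ℂ) * ((n : ℂ) + 1) * z ^ n := by
  have hgeo : Summable fun n : ℕ => 2 * α * ‖z‖ ^ n :=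
    (summable_geometric_of_lt_one (norm_nonneg z) hz).mul_left _
  refine Summable.of_norm (Summable.of_nonneg_of_le (fun n => norm_nonneg _) (fun n => ?_) hgeo)
  rw [sharp_norm_term1, sharp_coef_abs α hα]
  have h2 : ‖z‖ ^ n ≤ ‖z‖ ^ n := le_refl _
  have := sharp_coef_bound α hα n
  have hz0 : (0:ℝ) ≤ ‖z‖ ^ n := by positivity
  nlinarith [mul_le_mul_of_nonneg_right this hz0]

lemma sharp_summable2 (α : ℝ) (hα : 0 < α) {z : ℂ} (hz : ‖z‖ < 1) :
    Summable fun n : ℕ => ((2 * α / ((n + 1) + α) : ℝ) : ℂ) * z ^ (n + 1) := by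
  have hgeo : Summable fun n : ℕ => (2 * ‖z‖) * ‖z‖ ^ n :=
    (summable_geometric_of_lt_one (norm_nonneg z) hz).mul_left _
  refine Summable.of_norm (Summable.of_nonneg_of_le (fun n => norm_nonneg _) (fun n => ?_) hgeo)
  rw [sharp_norm_term2, sharp_coef_abs α hα]
  have h1 : (0:ℝ) < (n + 1) + α := by positivity
  have hb : 2 * α / ((n + 1) + α) ≤ 2 := by
    rw [div_le_iff₀ h1]; nlinarith
  have hz0 : (0:ℝ) ≤ ‖z‖ ^ n * ‖z‖ := by positivity
  nlinarith [mul_le_mul_of_nonneg_right hb hz0]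

/-- Key derivative lemma: the series function has the expected derivative on the unit ball. -/
lemma sharp_hasDerivAt (α : ℝ) (hα : 0 < α) {z : ℂ} (hz : ‖z‖ < 1) :
    HasDerivAt (fun y : ℂ => ∑' n : ℕ, ((2 * α / ((n + 1) + α) : ℝ) : ℂ) * y ^ (n + 1))
      (∑' n : ℕ, ((2 * α / ((n + 1) + α) : ℝ) : ℂ) * ((n : ℂ) + 1) * z ^ n) z := by
  set r : ℝ := (‖z‖ + 1) / 2 with hr
  have hzr : ‖z‖ < r := by rw [hr]; linarith
  have hr1 : r < 1 := by rw [hr]; linarith [norm_nonneg z]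
  have hr0 : 0 < r := lt_of_le_of_lt (norm_nonneg z) hzr
  have hu : Summable fun n : ℕ => 2 * α * r ^ n :=
    (summable_geometric_of_lt_one hr0.le hr1).mul_left _
  refine hasDerivAt_tsum_of_isPreconnected (t := ball (0:ℂ) r)
    (g := fun (n : ℕ) (y : ℂ) => ((2 * α / ((n + 1) + α) : ℝ) : ℂ) * y ^ (n + 1 : ℕ))
    (g' := fun (n : ℕ) (y : ℂ) => ((2 * α / ((n + 1) + α) : ℝ) : ℂ) * ((n : ℂ) + 1) * y ^ (n : ℕ))
    (y₀ := 0)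
    hu isOpen_ball (convex_ball (0:ℂ) r).isPreconnected ?_ ?_ ?_ ?_ ?_
  · intro n y _
    have h := (hasDerivAt_pow (n + 1) y).const_mul (((2 * α / ((n + 1) + α) : ℝ) : ℂ))
    simp only [Nat.add_sub_cancel, Nat.cast_add, Nat.cast_one, ← mul_assoc] at h
    exact h
  · intro n y hy
    have hyr : ‖y‖ < r := by simpa [mem_ball, dist_eq_norm] using hy
    rw [sharp_norm_term1, sharp_coef_abs α hα]
    have hpow : ‖y‖ ^ n ≤ r ^ n := pow_le_pow_left₀ (norm_nonneg y) hyr.le n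
    have hb := sharp_coef_bound α hα n
    have h1 : (0:ℝ) ≤ (2 * α / ((n + 1) + α)) * ((n:ℝ) + 1) := by positivity
    have h2 : (0:ℝ) ≤ r ^ n := by positivity
    nlinarith [mul_le_mul_of_nonneg_right hb h2, mul_le_mul_of_nonneg_left hpow h1]
  · exact mem_ball_self hr0
  · simpa using summable_zero
  · simpa [mem_ball, dist_eq_norm] using hzr

/-- Sharpness: the function `G(z) = 1 + Σ_{n≥1} (2α/(n+α)) zⁿ` is analytic on
the unit disk and satisfies `z G'(z) + α G(z) = α (1+z)/(1-z)`, where `(1+z)/(1-z)` has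
positive real part on the unit disk. -/
theorem sharpness_extremal_function
    (α : ℝ) (hα : 0 < α)
    (G : ℂ → ℂ)
    (hG : ∀ z ∈ ball (0:ℂ) 1,
      G z = 1 + ∑' n : ℕ, ((2 * α / ((n + 1) + α) : ℝ) : ℂ) * z ^ (n + 1)) :
    AnalyticOn ℂ G (ball 0 1) ∧
    (∀ z ∈ ball (0:ℂ) 1,
      z * deriv G z + (α : ℂ) * G z = (α : ℂ) * (1 + z) / (1 - z)) ∧
    (∀ z ∈ ball (0:ℂ) 1, 0 < ((1 + z) / (1 - z)).re) := by
  have hGd : ∀ z ∈ ball (0:ℂ) 1, HasDerivAt G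
      (∑' n : ℕ, ((2 * α / ((n + 1) + α) : ℝ) : ℂ) * ((n : ℂ) + 1) * z ^ n) z := by
    intro z hz
    have hz1 : ‖z‖ < 1 := by simpa [mem_ball, dist_eq_norm] using hz
    have h := (sharp_hasDerivAt α hα hz1).const_add (1 : ℂ)
    refine HasDerivAt.congr_of_eventuallyEq h ?_
    filter_upwards [isOpen_ball.mem_nhds hz] with y hy
    rw [hG y hy]
  refine ⟨?_, ?_, ?_⟩
  · -- Analyticity
    have hd : DifferentiableOn ℂ G (ball 0 1) := fun z hz =>
      ((hGd z hz).differentiableAt).differentiableWithinAt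
    exact hd.analyticOn isOpen_ball
  · -- The differential equation
    intro z hz
    have hz1 : ‖z‖ < 1 := by simpa [mem_ball, dist_eq_norm] using hz
    have hderiv : deriv G z
        = ∑' n : ℕ, ((2 * α / ((n + 1) + α) : ℝ) : ℂ) * ((n : ℂ) + 1) * z ^ n :=
      (hGd z hz).deriv
    rw [hderiv, hG z hz]
    have hz1' : (1 : ℂ) - z ≠ 0 := by
      intro h
      have hz2 : z = 1 := by linear_combination -h
      rw [hz2] at hz1; simp at hz1
    have hS1 := sharp_summable1 α hα hz1
    have hS2 := sharp_summable2 α hα hz1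
    have key : z * (∑' n : ℕ, ((2 * α / ((n + 1) + α) : ℝ) : ℂ) * ((n : ℂ) + 1) * z ^ n)
        + (α : ℂ) * (1 + ∑' n : ℕ, ((2 * α / ((n + 1) + α) : ℝ) : ℂ) * z ^ (n + 1))
        = (α : ℂ) + ∑' n : ℕ, (2 * α : ℂ) * z ^ (n + 1) := by
      rw [mul_add, mul_one, ← tsum_mul_left (a := z), ← tsum_mul_left (a := (α:ℂ))]
      have hs1 : Summable fun n : ℕ =>
          z * (((2 * α / ((n + 1) + α) : ℝ) : ℂ) * ((n : ℂ) + 1) * z ^ n) := hS1.mul_left z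
      have hs2 : Summable fun n : ℕ =>
          (α : ℂ) * (((2 * α / ((n + 1) + α) : ℝ) : ℂ) * z ^ (n + 1)) := hS2.mul_left _
      have hAB : (∑' n : ℕ, z * (((2 * α / ((n + 1) + α) : ℝ) : ℂ) * ((n : ℂ) + 1) * z ^ n))
          + (∑' n : ℕ, (α : ℂ) * (((2 * α / ((n + 1) + α) : ℝ) : ℂ) * z ^ (n + 1)))
          = ∑' n : ℕ, (2 * α : ℂ) * z ^ (n + 1) := by
        rw [← Summable.tsum_add hs1 hs2]
        apply tsum_congr
        intro n
        have hne : ((n:ℂ) + 1) + (α : ℂ) ≠ 0 := by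
          intro h
          have h2 := congrArg Complex.re h
          push_cast at h2
          simp at h2
          have : (0:ℝ) < (n + 1) + α := by positivity
          linarith
        have hcast : ((2 * α / ((n + 1) + α) : ℝ) : ℂ) = 2 * α / ((n:ℂ) + 1 + α) := by
          push_cast; ring
        rw [hcast]
        field_simp
        ring
      linear_combination hAB
    rw [key]
    have hg : ∑' n : ℕ, (2 * α : ℂ) * z ^ (n + 1) = 2 * α * (z * (1 - z)⁻¹) := by
      rw [tsum_mul_left]
      congr 1
      have hgs := tsum_geometric_of_norm_lt_one (ξ := z) hz1
      calc ∑' n : ℕ, z ^ (n + 1) = ∑' n : ℕ, z * z ^ n := by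
            apply tsum_congr; intro n; rw [pow_succ]; ring
        _ = z * ∑' n : ℕ, z ^ n := tsum_mul_left
        _ = z * (1 - z)⁻¹ := by rw [hgs]
    rw [hg]
    field_simp
    ring
  · -- positivity of the real part
    intro z hz
    have hz1 : ‖z‖ < 1 := by simpa [mem_ball] using hz
    have hz1' : (1 : ℂ) - z ≠ 0 := by
      intro h
      have hz2 : z = 1 := by linear_combination -h
      rw [hz2] at hz1; simp at hz1
    have hns : 0 < Complex.normSq (1 - z) := Complex.normSq_pos.mpr hz1'
    have habs : z.re ^ 2 + z.im ^ 2 < 1 := by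
      have h1 := Complex.sq_norm z
      rw [Complex.normSq_apply] at h1
      nlinarith [hz1, norm_nonneg z]
    rw [Complex.div_re]
    have h1 : (1 + z).re = 1 + z.re := by simp
    have h2 : (1 - z).re = 1 - z.re := by simp
    have h3 : (1 + z).im = z.im := by simp
    have h4 : (1 - z).im = -z.im := by simp
    rw [h1, h2, h3, h4]
    have hkey : (1 + z.re) * (1 - z.re) / Complex.normSq (1 - z)
        + z.im * -z.im / Complex.normSq (1 - z)
        = (1 - (z.re ^ 2 + z.im ^ 2)) / Complex.normSq (1 - z) := by
      field_simp
      ring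
    rw [hkey]
    exact div_pos (by linarith) hns
end

section
/- For 0 < r < 1, ∫_0^{2π} dθ / |1 - r e^{iθ}| ≥ √2 · log(1/(1-r)). -/
/-!
Since `1 - r e^{iθ} = (1 - r) + r (1 - e^{iθ})` and `|1 - e^{iθ}| ≤ |θ|`, the integrand is at least
`1 / (1 - r + θ)` on `[0, π]`, whose integral is `log ((1 - r + π) / (1 - r)) ≥ log (1 / (1 - r))`.
The integrand is invariant under `θ ↦ 2π - θ` (complex conjugation), so the integral over `[0, 2π]`
is twice that over `[0, π]`, and `2 ≥ √2`.
-/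

open Complex Real

theorem intervalIntegral.integral_eq_two_smul_of_reflect {E : Type*} [NormedAddCommGroup E]
    [NormedSpace ℝ E] {f : ℝ → E} {c : ℝ} (hf : IntervalIntegrable f MeasureTheory.volume 0 c)
    (hreflect : ∀ x, f (2 * c - x) = f x) :
    ∫ x in 0..2 * c, f x = 2 • ∫ x in 0..c, f x := by
  have hf' : IntervalIntegrable f MeasureTheory.volume c (2 * c) := by
    have := hf.comp_sub_left (2 * c)
    rw [sub_zero, show 2 * c - c = c by ring] at this
    simpa only [hreflect] using this.symm
  have hhalf : ∫ x in c..2 * c, f x = ∫ x in 0..c, f x := by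
    have := intervalIntegral.integral_comp_sub_left f (2 * c) (a := 0) (b := c)
    rw [sub_zero, show 2 * c - c = c by ring] at this
    simp only [hreflect] at this
    exact this.symm
  rw [← intervalIntegral.integral_add_adjacent_intervals hf hf', hhalf, two_smul]

theorem integral_one_div_const_add {a b : ℝ} (ha : 0 < a) (hb : 0 ≤ b) :
    ∫ x in 0..b, 1 / (a + x) = Real.log ((a + b) / a) := by
  rw [intervalIntegral.integral_comp_add_left (fun x => 1 / x), add_zero,
    integral_one_div_of_pos ha (by linarith)]

theorem norm_one_sub_mul_exp_le {r : ℝ} (hr0 : 0 ≤ r) (hr1 : r ≤ 1) (θ : ℝ) :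
    ‖(1 : ℂ) - r * exp (θ * I)‖ ≤ 1 - r + |θ| := by
  have hexp : ‖exp (θ * I) - 1‖ ≤ |θ| := by
    simpa [mul_comm] using norm_exp_I_mul_ofReal_sub_one_le (x := θ)
  calc ‖(1 : ℂ) - r * exp (θ * I)‖ = ‖((1 - r : ℝ) : ℂ) - r * (exp (θ * I) - 1)‖ := by
        push_cast; ring_nf
    _ ≤ ‖((1 - r : ℝ) : ℂ)‖ + ‖(r : ℂ) * (exp (θ * I) - 1)‖ := norm_sub_le _ _
    _ = 1 - r + r * ‖exp (θ * I) - 1‖ := by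
        rw [norm_mul, Complex.norm_real, Complex.norm_real, Real.norm_of_nonneg (by linarith),
          Real.norm_of_nonneg hr0]
    _ ≤ 1 - r + |θ| := by nlinarith [norm_nonneg (exp (θ * I) - 1)]

theorem norm_one_sub_mul_exp_pos {r : ℝ} (hr : |r| < 1) (θ : ℝ) :
    0 < ‖(1 : ℂ) - r * exp (θ * I)‖ := by
  refine norm_pos_iff.2 (sub_ne_zero.2 fun h => ?_)
  have := congrArg norm h
  rw [norm_one, norm_mul, norm_exp_ofReal_mul_I, mul_one, Complex.norm_real,
    Real.norm_eq_abs] at this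
  linarith

theorem norm_one_sub_mul_exp_two_pi_sub (r θ : ℝ) :
    ‖(1 : ℂ) - r * exp (↑(2 * π - θ) * I)‖ = ‖(1 : ℂ) - r * exp (θ * I)‖ := by
  have hconj : exp (↑(2 * π - θ) * I) = (starRingEnd ℂ) (exp (θ * I)) := by
    rw [← exp_conj, map_mul, conj_ofReal, conj_I,
      show (↑(2 * π - θ) : ℂ) * I = θ * -I + 2 * π * I by push_cast; ring,
      Complex.exp_add, exp_two_pi_mul_I, mul_one]
  rw [hconj, ← Complex.norm_conj]
  simp

theorem continuous_one_div_norm_one_sub_mul_exp {r : ℝ} (hr : |r| < 1) :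
    Continuous fun θ : ℝ => 1 / ‖(1 : ℂ) - r * exp (θ * I)‖ :=
  continuous_const.div (by fun_prop) fun θ => (norm_one_sub_mul_exp_pos hr θ).ne'

theorem log_div_le_integral_one_div_norm_one_sub_mul_exp {r b : ℝ} (hr0 : 0 ≤ r) (hr1 : r < 1)
    (hb : 0 ≤ b) :
    Real.log ((1 - r + b) / (1 - r)) ≤ ∫ θ in 0..b, 1 / ‖(1 : ℂ) - r * exp (θ * I)‖ := by
  have hr : |r| < 1 := abs_lt.2 ⟨by linarith, hr1⟩
  rw [← integral_one_div_const_add (by linarith) hb]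
  refine intervalIntegral.integral_mono_on hb ?_
    ((continuous_one_div_norm_one_sub_mul_exp hr).intervalIntegrable 0 b) fun θ hθ => ?_
  · refine ContinuousOn.intervalIntegrable (continuousOn_const.div (by fun_prop) fun θ hθ => ?_)
    rw [Set.uIcc_of_le hb] at hθ
    linarith [hθ.1]
  · refine one_div_le_one_div_of_le (norm_one_sub_mul_exp_pos hr θ) ?_
    simpa [abs_of_nonneg hθ.1] using norm_one_sub_mul_exp_le hr0 hr1.le θ

/-- For `0 < r < 1`, `∫_0^{2π} dθ/|1 - re^{iθ}| ≥ √2 log(1/(1-r))`. -/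
theorem integral_mean_lower_bound
    (r : ℝ) (hr0 : 0 < r) (hr1 : r < 1) :
    Real.sqrt 2 * Real.log (1 / (1 - r)) ≤
      ∫ θ in (0:ℝ)..(2 * π), 1 / ‖(1 : ℂ) - (r : ℂ) * Complex.exp (θ * Complex.I)‖ := by
  have hr : |r| < 1 := abs_lt.2 ⟨by linarith, hr1⟩
  have hlog : 0 ≤ Real.log (1 / (1 - r)) :=
    Real.log_nonneg ((le_div_iff₀ (by linarith)).2 (by linarith))
  have hsqrt : Real.sqrt 2 ≤ 2 := Real.sqrt_le_iff.2 ⟨by norm_num, by norm_num⟩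
  calc Real.sqrt 2 * Real.log (1 / (1 - r))
      ≤ 2 * Real.log (1 / (1 - r)) := mul_le_mul_of_nonneg_right hsqrt hlog
    _ ≤ 2 * Real.log ((1 - r + π) / (1 - r)) := by
        gcongr
        linarith [pi_gt_three]
    _ ≤ 2 * ∫ θ in 0..π, 1 / ‖(1 : ℂ) - r * exp (θ * I)‖ := by
        gcongr
        exact log_div_le_integral_one_div_norm_one_sub_mul_exp hr0.le hr1 pi_pos.le
    _ = _ := by
        rw [intervalIntegral.integral_eq_two_smul_of_reflect
          ((continuous_one_div_norm_one_sub_mul_exp hr).intervalIntegrable 0 π)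
          fun θ => by rw [norm_one_sub_mul_exp_two_pi_sub], nsmul_eq_mul, Nat.cast_ofNat]
end

section
/- Let α > 1 and f ∈ B_1(α): f analytic on the unit disk, f(0)=0, f'(0)=1, f(z)/z and f' nonvanishing, with Re[(f(z)/z)^{α-1} f'(z)] > 0. Then for every 0 < r < 1 and θ_1 < θ_2 with θ_2 − θ_1 ≤ 2π, ∫_{θ_1}^{θ_2} [ Re(1 + z f''(z)/f'(z)) + (α−1) Re(z f'(z)/f(z)) ] dθ > −π, where z = r e^{iθ}. -/
open Complex Metric Real Set

private lemma hd_re {G : ℝ → ℂ} {d : ℂ} {x : ℝ} (h : HasDerivAt G d x) :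
    HasDerivAt (fun t => (G t).re) d.re x := by
  exact (Complex.reCLM.hasFDerivAt.comp_hasDerivAt x h :)

private lemma hd_im {G : ℝ → ℂ} {d : ℂ} {x : ℝ} (h : HasDerivAt G d x) :
    HasDerivAt (fun t => (G t).im) d.im x := by
  exact (Complex.imCLM.hasFDerivAt.comp_hasDerivAt x h :)

section
variable {α : ℝ} {f q : ℂ → ℂ}

private lemma segment_pos (hα : 1 < α)
    (hq_diff : ∀ z ∈ ball (0:ℂ) 1, DifferentiableAt ℂ q z)
    (hq_ne : ∀ z ∈ ball (0:ℂ) 1, q z ≠ 0)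
    (hf'_eq : ∀ z ∈ ball (0:ℂ) 1, deriv f z = q z + z * deriv q z)
    (hD : ∀ z ∈ ball (0:ℂ) 1, DifferentiableAt ℂ (deriv f) z)
    (hgRe : ∀ z ∈ ball (0:ℂ) 1, z ≠ 0 → 0 < ((q z) ^ ((α:ℂ)-1) * deriv f z).re)
    {w : ℂ} (hw : w ∈ ball (0:ℂ) 1) (hw0 : w ≠ 0)
    (hseg : ∀ v : ℝ, v ∈ Set.Ioc (0:ℝ) 1 → q ((v:ℂ) * w) ∈ Complex.slitPlane) :
    0 < ((q w) ^ (α:ℂ)).re := by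
  have hα0 : (0:ℝ) < α := lt_trans one_pos hα
  -- membership of segment points
  have hmem : ∀ v : ℝ, v ∈ Set.Icc (0:ℝ) 1 → ((v:ℂ) * w) ∈ ball (0:ℂ) 1 := by
    intro v hv
    rw [mem_ball_zero_iff] at hw ⊢
    calc ‖(v:ℂ) * w‖ = |v| * ‖w‖ := by simp [Complex.norm_real]
    _ ≤ 1 * ‖w‖ := by
        apply mul_le_mul_of_nonneg_right _ (norm_nonneg _)
        rw [abs_le]; exact ⟨by linarith [hv.1], hv.2⟩
    _ < 1 := by rw [one_mul]; exact hw
  have hne0 : ∀ v : ℝ, v ∈ Set.Ioc (0:ℝ) 1 → ((v:ℂ) * w) ≠ 0 := by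
    intro v hv
    exact mul_ne_zero (by exact_mod_cast ne_of_gt hv.1) hw0
  -- the potential Φ and its derivative φ
  set Φ : ℝ → ℂ := fun v => (v:ℂ) ^ (α:ℂ) * (q ((v:ℂ) * w)) ^ (α:ℂ) with hΦ
  set φ : ℝ → ℂ := fun v =>
    ((α * v ^ (α-1) : ℝ) : ℂ) * ((q ((v:ℂ) * w)) ^ ((α:ℂ)-1) * deriv f ((v:ℂ) * w)) with hφ
  have hderiv : ∀ v : ℝ, v ∈ Set.Ioc (0:ℝ) 1 → HasDerivAt Φ (φ v) v := by
    intro v hv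
    have hvmem := hmem v ⟨le_of_lt hv.1, hv.2⟩
    have hslitv : (v:ℂ) ∈ Complex.slitPlane := Complex.ofReal_mem_slitPlane.mpr hv.1
    have hvne : (v:ℂ) ≠ 0 := by exact_mod_cast ne_of_gt hv.1
    have hQne : q ((v:ℂ) * w) ≠ 0 := hq_ne _ hvmem
    -- complex function Ψ
    have hA : HasDerivAt (fun t : ℂ => t ^ (α:ℂ)) ((α:ℂ) * (v:ℂ) ^ ((α:ℂ)-1) * 1) (v:ℂ) :=
      (hasDerivAt_id _).cpow_const hslitv
    have hinner : HasDerivAt (fun t : ℂ => t * w) w (v:ℂ) := by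
      simpa using (hasDerivAt_id ((v:ℂ))).mul_const w
    have hB : HasDerivAt (fun t : ℂ => q (t * w)) (deriv q ((v:ℂ) * w) * w) (v:ℂ) :=
      HasDerivAt.comp (v:ℂ) ((hq_diff _ hvmem).hasDerivAt) hinner
    have hC : HasDerivAt (fun t : ℂ => (q (t * w)) ^ (α:ℂ))
        ((α:ℂ) * (q ((v:ℂ) * w)) ^ ((α:ℂ)-1) * (deriv q ((v:ℂ) * w) * w)) (v:ℂ) :=
      hB.cpow_const (hseg v hv)
    have hΨ := hA.mul hC
    have hΦv := hΨ.comp_ofReal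
    refine hΦv.congr_deriv ?_
    -- algebra: rewrite the derivative value
    have hfd : deriv f ((v:ℂ) * w) = q ((v:ℂ) * w) + ((v:ℂ) * w) * deriv q ((v:ℂ) * w) :=
      hf'_eq _ hvmem
    have e1 : ((v:ℂ)) ^ (α:ℂ) = (v:ℂ) ^ ((α:ℂ)-1) * (v:ℂ) := by
      have e := Complex.cpow_add ((α:ℂ)-1) 1 hvne
      rw [show ((α:ℂ)-1)+1 = (α:ℂ) from by ring, Complex.cpow_one] at e
      exact e
    have e2 : (q ((v:ℂ) * w)) ^ (α:ℂ) = (q ((v:ℂ) * w)) ^ ((α:ℂ)-1) * q ((v:ℂ) * w) := by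
      have e := Complex.cpow_add ((α:ℂ)-1) 1 hQne
      rw [show ((α:ℂ)-1)+1 = (α:ℂ) from by ring, Complex.cpow_one] at e
      exact e
    have e3 : ((α * v ^ (α-1) : ℝ) : ℂ) = (α:ℂ) * (v:ℂ) ^ ((α:ℂ)-1) := by
      push_cast
      rw [Complex.ofReal_cpow (le_of_lt hv.1)]
      push_cast
      ring
    rw [hφ]; dsimp only
    rw [e3, hfd, e1, e2]
    ring
  -- continuity of Re ∘ φ on [a, 1] for a > 0
  have hφcont : ∀ a : ℝ, 0 < a → ContinuousOn (fun v => (φ v).re) (Set.Icc a 1) := by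
    intro a ha
    intro v hv
    have hv0 : 0 < v := lt_of_lt_of_le ha hv.1
    have hvmem := hmem v ⟨le_of_lt hv0, hv.2⟩
    apply ContinuousAt.continuousWithinAt
    have hinC : ContinuousAt (fun u : ℝ => (u:ℂ) * w) v :=
      Complex.continuous_ofReal.continuousAt.mul continuousAt_const
    have hq_at : ContinuousAt (fun u : ℝ => q ((u:ℂ) * w)) v :=
      ContinuousAt.comp (g := q) (f := fun u : ℝ => (u:ℂ) * w)
        ((hq_diff _ hvmem).continuousAt) hinC
    have hd_at : ContinuousAt (fun u : ℝ => deriv f ((u:ℂ) * w)) v :=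
      ContinuousAt.comp (g := deriv f) (f := fun u : ℝ => (u:ℂ) * w)
        ((hD _ hvmem).continuousAt) hinC
    apply Complex.continuous_re.continuousAt.comp
    apply ContinuousAt.mul
    · apply Complex.continuous_ofReal.continuousAt.comp
      exact (continuousAt_const.mul ((Real.continuousAt_rpow_const v (α-1)
        (Or.inl (ne_of_gt hv0)))))
    · exact (ContinuousAt.comp (g := (· ^ ((α:ℂ)-1))) (f := fun u : ℝ => q ((u:ℂ) * w))
        (continuousAt_cpow_const (hseg v ⟨hv0, hv.2⟩)) hq_at).mul hd_at
  -- FTC on [a,1]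
  have hFTC : ∀ a : ℝ, 0 < a → a ≤ 1 →
      ∫ v in a..1, (φ v).re = ((q w) ^ (α:ℂ)).re - (Φ a).re := by
    intro a ha ha1
    have huIcc : Set.uIcc a 1 = Set.Icc a 1 := Set.uIcc_of_le ha1
    have hderiv' : ∀ v ∈ Set.uIcc a 1, HasDerivAt (fun v => (Φ v).re) ((φ v).re) v := by
      intro v hv
      rw [huIcc] at hv
      exact hd_re (hderiv v ⟨lt_of_lt_of_le ha hv.1, hv.2⟩)
    have hint : IntervalIntegrable (fun v => (φ v).re) MeasureTheory.volume a 1 := by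
      apply ContinuousOn.intervalIntegrable
      rw [huIcc]; exact hφcont a ha
    have h1 : Φ 1 = (q w) ^ (α:ℂ) := by
      rw [hΦ]; dsimp only; push_cast; rw [Complex.one_cpow, one_mul, one_mul]
    rw [intervalIntegral.integral_eq_sub_of_hasDerivAt hderiv' hint]
    simp only [h1]
  -- pointwise positivity of the integrand
  have hφpos : ∀ v : ℝ, v ∈ Set.Ioc (0:ℝ) 1 → 0 < (φ v).re := by
    intro v hv
    have hvmem := hmem v ⟨le_of_lt hv.1, hv.2⟩
    have h1 : 0 < α * v ^ (α-1) := mul_pos hα0 (Real.rpow_pos_of_pos hv.1 _)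
    have h2 := hgRe _ hvmem (hne0 v hv)
    have h3 : (φ v).re
        = (α * v ^ (α-1)) * ((q ((v:ℂ)*w)) ^ ((α:ℂ)-1) * deriv f ((v:ℂ)*w)).re := by
      rw [hφ]; simp
    rw [h3]; exact mul_pos h1 h2
  -- integral over [1/2, 1] is positive
  have hint12 : IntervalIntegrable (fun v => (φ v).re) MeasureTheory.volume (1/2) 1 := by
    apply ContinuousOn.intervalIntegrable
    rw [Set.uIcc_of_le (by norm_num : (1/2:ℝ) ≤ 1)]
    exact hφcont (1/2) (by norm_num)
  have hc0 : 0 < ∫ v in (1/2:ℝ)..1, (φ v).re := by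
    refine intervalIntegral.intervalIntegral_pos_of_pos_on hint12 (fun x hx => ?_) (by norm_num)
    exact hφpos x ⟨by linarith [hx.1], le_of_lt hx.2⟩
  set c₀ : ℝ := ∫ v in (1/2:ℝ)..1, (φ v).re with hc₀def
  -- uniform bound for |q| on the segment
  obtain ⟨M, hM⟩ : ∃ M, ∀ v ∈ Set.Icc (0:ℝ) 1, ‖q ((v:ℂ)*w)‖ ≤ M := by
    apply isCompact_Icc.exists_bound_of_continuousOn
    intro v hv
    exact (ContinuousAt.comp (g := q) (f := fun u : ℝ => (u:ℂ) * w)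
      ((hq_diff _ (hmem v hv)).continuousAt)
      (Complex.continuous_ofReal.continuousAt.mul continuousAt_const)).continuousWithinAt
  set M' : ℝ := max M 1 with hM'def
  have hM'1 : (1:ℝ) ≤ M' := le_max_right _ _
  have hM'0 : (0:ℝ) < M' := lt_of_lt_of_le one_pos hM'1
  have hMpow : (0:ℝ) < M' ^ α := Real.rpow_pos_of_pos hM'0 _
  -- bound on Φ a for small a
  have hΦbound : ∀ a : ℝ, 0 < a → a ≤ 1 → -(a * M' ^ α) ≤ (Φ a).re := by
    intro a ha ha1
    have habs : ‖Φ a‖ ≤ a * M' ^ α := by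
      have h1 : ‖((a:ℝ):ℂ) ^ (α:ℂ)‖ = a ^ α := by
        rw [Complex.norm_cpow_eq_rpow_re_of_pos ha]; norm_num
      have hQne : q ((a:ℂ) * w) ≠ 0 := hq_ne _ (hmem a ⟨le_of_lt ha, ha1⟩)
      have h2 : ‖(q ((a:ℂ)*w)) ^ (α:ℂ)‖ = ‖q ((a:ℂ)*w)‖ ^ α := by
        rw [Complex.norm_cpow_of_ne_zero hQne]; norm_num
      have h3 : ‖q ((a:ℂ)*w)‖ ^ α ≤ M' ^ α := by
        apply Real.rpow_le_rpow (norm_nonneg _) _ (le_of_lt hα0)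
        calc ‖q ((a:ℂ)*w)‖ ≤ M := by
              simpa using hM a ⟨le_of_lt ha, ha1⟩
        _ ≤ M' := le_max_left _ _
      have h4 : a ^ α ≤ a := by
        calc a ^ α ≤ a ^ (1:ℝ) :=
              Real.rpow_le_rpow_of_exponent_ge ha ha1 (le_of_lt hα)
        _ = a := Real.rpow_one a
      calc ‖Φ a‖ = a ^ α * ‖(q ((a:ℂ)*w)) ^ (α:ℂ)‖ := by
            rw [hΦ]; dsimp only; rw [norm_mul, h1]
      _ ≤ a ^ α * (M' ^ α) := by
            rw [h2]; exact mul_le_mul_of_nonneg_left h3 (Real.rpow_nonneg (le_of_lt ha) _)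
      _ ≤ a * M' ^ α := mul_le_mul_of_nonneg_right h4 (le_of_lt hMpow)
    have := Complex.abs_re_le_norm (Φ a)
    have h5 : |((Φ a).re)| ≤ a * M' ^ α := le_trans this habs
    linarith [abs_le.mp h5 |>.1]
  -- choose a
  set a : ℝ := min (1/2) (c₀ / (2 * M' ^ α)) with hadef
  have ha0 : 0 < a := lt_min (by norm_num) (div_pos hc0 (by positivity))
  have ha12 : a ≤ 1/2 := min_le_left _ _
  have ha1 : a ≤ 1 := le_trans ha12 (by norm_num)
  have haM : a * M' ^ α ≤ c₀ / 2 := by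
    have : a ≤ c₀ / (2 * M' ^ α) := min_le_right _ _
    calc a * M' ^ α ≤ (c₀ / (2 * M' ^ α)) * M' ^ α :=
          mul_le_mul_of_nonneg_right this (le_of_lt hMpow)
    _ = c₀ / 2 := by field_simp
  -- split the integral
  have hintA : IntervalIntegrable (fun v => (φ v).re) MeasureTheory.volume a (1/2) := by
    apply ContinuousOn.intervalIntegrable
    rw [Set.uIcc_of_le ha12]
    exact (hφcont a ha0).mono (Set.Icc_subset_Icc le_rfl (by norm_num))
  have hsplit : ∫ v in a..1, (φ v).re
      = (∫ v in a..(1/2:ℝ), (φ v).re) + ∫ v in (1/2:ℝ)..1, (φ v).re :=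
    (intervalIntegral.integral_add_adjacent_intervals hintA hint12).symm
  have hnonnegA : 0 ≤ ∫ v in a..(1/2:ℝ), (φ v).re := by
    apply intervalIntegral.integral_nonneg ha12
    intro u hu
    exact le_of_lt (hφpos u ⟨lt_of_lt_of_le ha0 hu.1, le_trans hu.2 (by norm_num)⟩)
  have hmain := hFTC a ha0 ha1
  have hq_re : ((q w) ^ (α:ℂ)).re = (Φ a).re + ∫ v in a..1, (φ v).re := by linarith
  rw [hq_re, hsplit]
  have := hΦbound a ha0 ha1
  linarith

private lemma q_repos (hα : 1 < α)
    (hq_diff : ∀ z ∈ ball (0:ℂ) 1, DifferentiableAt ℂ q z)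
    (hq0 : q 0 = 1)
    (hq_ne : ∀ z ∈ ball (0:ℂ) 1, q z ≠ 0)
    (hf'_eq : ∀ z ∈ ball (0:ℂ) 1, deriv f z = q z + z * deriv q z)
    (hD : ∀ z ∈ ball (0:ℂ) 1, DifferentiableAt ℂ (deriv f) z)
    (hgRe : ∀ z ∈ ball (0:ℂ) 1, z ≠ 0 → 0 < ((q z) ^ ((α:ℂ)-1) * deriv f z).re) :
    ∀ z ∈ ball (0:ℂ) 1, 0 < (q z).re := by
  intro z hz
  rcases eq_or_ne z 0 with rfl | hz0
  · rw [hq0]; norm_num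
  have hα0 : (0:ℝ) < α := lt_trans one_pos hα
  set c : ℝ := π / (2*α) with hcdef
  have hc0 : 0 < c := div_pos Real.pi_pos (by linarith)
  have hclt : c < π/2 := by
    rw [hcdef, div_lt_div_iff₀ (by linarith) (by norm_num)]
    nlinarith [Real.pi_pos]
  have hcos0 : 0 < Real.cos c := Real.cos_pos_of_mem_Ioo ⟨by linarith, hclt⟩
  have hmem : ∀ u : ℝ, u ∈ Icc (0:ℝ) 1 → ((u:ℂ) * z) ∈ ball (0:ℂ) 1 := by
    intro u hu
    rw [mem_ball_zero_iff] at hz ⊢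
    calc ‖(u:ℂ) * z‖ = |u| * ‖z‖ := by simp [Complex.norm_real]
    _ ≤ 1 * ‖z‖ := by
        apply mul_le_mul_of_nonneg_right _ (norm_nonneg _)
        rw [abs_le]; exact ⟨by linarith [hu.1], hu.2⟩
    _ < 1 := by rw [one_mul]; exact hz
  set σ : ℝ → ℂ := fun u => q ((u:ℂ) * z) with hσdef
  have hσcont : ∀ u ∈ Icc (0:ℝ) 1, ContinuousAt σ u := fun u hu =>
    ContinuousAt.comp (g := q) (f := fun u : ℝ => (u:ℂ) * z)
      ((hq_diff _ (hmem u hu)).continuousAt)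
      (Complex.continuous_ofReal.continuousAt.mul continuousAt_const)
  have hσne : ∀ u ∈ Icc (0:ℝ) 1, σ u ≠ 0 := fun u hu => hq_ne _ (hmem u hu)
  have hσ0 : σ 0 = 1 := by rw [hσdef]; dsimp only; push_cast; rw [zero_mul, hq0]
  set P : ℝ → Prop := fun u => ‖σ u‖ * Real.cos c ≤ (σ u).re with hPdef
  have hP0 : P 0 := by
    rw [hPdef]; dsimp only; rw [hσ0]
    simpa using Real.cos_le_one c
  set S : Set ℝ := {t | t ∈ Icc (0:ℝ) 1 ∧ ∀ u ∈ Icc (0:ℝ) t, P u} with hSdef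
  have h0S : (0:ℝ) ∈ S := ⟨⟨le_rfl, zero_le_one⟩, by
    intro u hu
    have hu0 : u = 0 := le_antisymm hu.2 hu.1
    rwa [hu0]⟩
  have hbdd : BddAbove S := BddAbove.mono (fun t ht => ht.1) bddAbove_Icc
  set T := sSup S with hTdef
  have hTmem : T ∈ Icc (0:ℝ) 1 :=
    ⟨le_csSup hbdd h0S, csSup_le ⟨0, h0S⟩ (fun x hx => hx.1.2)⟩
  have hPicoT : ∀ u, 0 ≤ u → u < T → P u := by
    intro u hu0 huT
    obtain ⟨t, htS, hut⟩ := exists_lt_of_lt_csSup ⟨0, h0S⟩ huT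
    exact htS.2 u ⟨hu0, le_of_lt hut⟩
  have hPT : ∀ u ∈ Icc (0:ℝ) T, P u := by
    intro u hu
    rcases lt_or_eq_of_le hu.2 with h | h
    · exact hPicoT u hu.1 h
    subst h
    rcases eq_or_lt_of_le hTmem.1 with hT0 | hT0
    · exact hT0 ▸ hP0
    have hcT : ContinuousAt (fun v => (σ v).re - ‖σ v‖ * Real.cos c) T := by
      have h1 := hσcont T hTmem
      exact ((Complex.continuous_re.continuousAt.comp h1).sub
        (((continuous_norm.continuousAt.comp h1)).mul continuousAt_const))
    have hev : ∀ᶠ v in nhdsWithin T (Set.Iio T),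
        0 ≤ (σ v).re - ‖σ v‖ * Real.cos c := by
      filter_upwards [Ioo_mem_nhdsLT hT0] with v hv
      have := hPicoT v (le_of_lt hv.1) hv.2
      simp only [hPdef] at this; linarith
    have hge : 0 ≤ (σ T).re - ‖σ T‖ * Real.cos c :=
      ge_of_tendsto (hcT.tendsto.mono_left nhdsWithin_le_nhds) hev
    simp only [hPdef]
    linarith
  have hfinal : ∀ u ∈ Icc (0:ℝ) T, 0 < (σ u).re := by
    intro u hu
    have hp := hPT u hu
    have habs : 0 < ‖σ u‖ :=
      norm_pos_iff.mpr (hσne u ⟨hu.1, le_trans hu.2 hTmem.2⟩)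
    calc (0:ℝ) < ‖σ u‖ * Real.cos c := mul_pos habs hcos0
    _ ≤ (σ u).re := hp
  by_cases hT1 : T = 1
  · have h1 := hfinal 1 (by rw [hT1]; exact ⟨zero_le_one, le_rfl⟩)
    have : σ 1 = q z := by rw [hσdef]; dsimp only; push_cast; rw [one_mul]
    rwa [this] at h1
  exfalso
  have hTlt : T < 1 := lt_of_le_of_ne hTmem.2 hT1
  have hreT : 0 < (σ T).re := hfinal T ⟨hTmem.1, le_rfl⟩
  have hcσre : ContinuousAt (fun u => (σ u).re) T :=
    Complex.continuous_re.continuousAt.comp (hσcont T hTmem)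
  obtain ⟨δ, hδ0, hδball⟩ := Metric.mem_nhds_iff.mp
    (hcσre.preimage_mem_nhds (Ioi_mem_nhds hreT))
  set T' : ℝ := min (T + δ/2) ((T+1)/2) with hT'def
  have hTT' : T < T' := lt_min (by linarith) (by linarith)
  have hT'1 : T' ≤ 1 := le_trans (min_le_right _ _) (by linarith)
  have hT'0 : 0 ≤ T' := le_trans hTmem.1 (le_of_lt hTT')
  have hre' : ∀ u ∈ Icc (0:ℝ) T', 0 < (σ u).re := by
    intro u hu
    rcases le_or_gt u T with h | h
    · exact hfinal u ⟨hu.1, h⟩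
    · apply hδball
      rw [Metric.mem_ball, Real.dist_eq, abs_of_pos (by linarith : (0:ℝ) < u - T)]
      have : u ≤ T + δ/2 := le_trans hu.2 (min_le_left _ _)
      linarith
  have hpow : ∀ u ∈ Ioc (0:ℝ) T', 0 < ((σ u) ^ (α:ℂ)).re := by
    intro u hu
    have hu1 : u ≤ 1 := le_trans hu.2 hT'1
    refine segment_pos hα hq_diff hq_ne hf'_eq hD hgRe (hmem u ⟨le_of_lt hu.1, hu1⟩)
      (mul_ne_zero (by exact_mod_cast ne_of_gt hu.1) hz0) ?_
    intro v hv
    have hkey : (v:ℂ) * ((u:ℂ) * z) = ((v*u :ℝ):ℂ) * z := by push_cast; ring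
    rw [hkey]
    have hvu : v*u ∈ Icc (0:ℝ) T' := by
      constructor
      · exact mul_nonneg (le_of_lt hv.1) (le_of_lt hu.1)
      · calc v*u ≤ 1*u := mul_le_mul_of_nonneg_right hv.2 (le_of_lt hu.1)
        _ = u := one_mul u
        _ ≤ T' := hu.2
    exact Or.inl (hre' (v*u) hvu)
  set γ : ℝ → ℝ := fun u => α * Complex.arg (σ u) with hγdef
  have hγcont : ContinuousOn γ (Icc (0:ℝ) T') := by
    intro u hu
    exact (continuousAt_const.mul ((Complex.continuousAt_arg (Or.inl (hre' u hu))).comp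
      (hσcont u ⟨hu.1, le_trans hu.2 hT'1⟩))).continuousWithinAt
  have hγ0 : γ 0 = 0 := by rw [hγdef]; dsimp only; rw [hσ0, Complex.arg_one, mul_zero]
  have hγne : ∀ v ∈ Icc (0:ℝ) T', γ v ≠ π/2 ∧ γ v ≠ -(π/2) := by
    intro v hv
    rcases eq_or_lt_of_le hv.1 with hv0 | hv0
    · rw [← hv0, hγ0]
      have hpi := Real.pi_pos
      constructor
      · intro hcon; linarith [hcon.symm.le]
      · intro hcon
        have h0 : (0:ℝ) = -(π/2) := hcon
        linarith [h0.ge]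
    have hp := hpow v ⟨hv0, hv.2⟩
    have hre0 : ((σ v) ^ (α:ℂ)).re
        = Real.exp ((Complex.log (σ v)).re * α) * Real.cos (γ v) := by
      rw [Complex.cpow_def_of_ne_zero (hσne v ⟨hv.1, le_trans hv.2 hT'1⟩), Complex.exp_re]
      have h1 : (Complex.log (σ v) * (α:ℂ)).re = (Complex.log (σ v)).re * α := by simp
      have h2 : (Complex.log (σ v) * (α:ℂ)).im = γ v := by
        rw [Complex.mul_im, hγdef]; simp [Complex.log_im]; ring
      rw [h1, h2]
    constructor <;> intro hcon <;> rw [hre0, hcon] at hp <;> simp at hp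
  have hγlt : ∀ u ∈ Icc (0:ℝ) T', |γ u| < π/2 := by
    intro u hu
    by_contra hcon
    push_neg at hcon
    have hpi := Real.pi_pos
    have e1 : γ 0 ≤ π/2 := by rw [hγ0]; linarith
    have e2 : -(π/2) ≤ γ 0 := by rw [hγ0]; linarith
    rcases le_abs.mp hcon with hge | hge
    · obtain ⟨v, hv, hveq⟩ := intermediate_value_Icc hu.1
        (hγcont.mono (Icc_subset_Icc le_rfl hu.2))
        (⟨e1, hge⟩ : π/2 ∈ Icc (γ 0) (γ u))
      exact (hγne v ⟨hv.1, le_trans hv.2 hu.2⟩).1 hveq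
    · obtain ⟨v, hv, hveq⟩ := intermediate_value_Icc' hu.1
        (hγcont.mono (Icc_subset_Icc le_rfl hu.2))
        (⟨by linarith, e2⟩ : -(π/2) ∈ Icc (γ u) (γ 0))
      exact (hγne v ⟨hv.1, le_trans hv.2 hu.2⟩).2 hveq
  have hPT' : ∀ u ∈ Icc (0:ℝ) T', P u := by
    intro u hu
    have h1 : |Complex.arg (σ u)| ≤ c := by
      have h2 := hγlt u hu
      rw [hγdef] at h2; dsimp only at h2
      rw [abs_mul, abs_of_pos hα0] at h2
      rw [hcdef]
      rw [le_div_iff₀ (by linarith : (0:ℝ) < 2*α)]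
      nlinarith [abs_nonneg (Complex.arg (σ u))]
    have h2 : (σ u).re = ‖σ u‖ * Real.cos (Complex.arg (σ u)) :=
      (Complex.norm_mul_cos_arg _).symm
    rw [hPdef]; dsimp only; rw [h2]
    apply mul_le_mul_of_nonneg_left _ (norm_nonneg _)
    rw [← Real.cos_abs (Complex.arg (σ u))]
    exact Real.cos_le_cos_of_nonneg_of_le_pi (abs_nonneg _)
      (by linarith [Real.pi_pos] : c ≤ π) h1
  have hT'S : T' ∈ S := ⟨⟨hT'0, hT'1⟩, hPT'⟩
  exact absurd (le_csSup hbdd hT'S) (not_le.mpr hTT')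

/-- for `f ∈ B₁(α)` with `α > 1`, the arc integral of
`Re(1 + zf''/f') + (α-1) Re(zf'/f)` over any arc of the circle `|z| = r` of length at most
`2π` is greater than `-π`. -/
theorem bazilevic_necessary_condition
    (α : ℝ) (hα : 1 < α)
    (f : ℂ → ℂ)
    (hf : AnalyticOn ℂ f (ball 0 1))
    (hf0 : f 0 = 0) (hf'0 : deriv f 0 = 1)
    (hfz : ∀ z ∈ ball (0:ℂ) 1, z ≠ 0 → f z / z ≠ 0)
    (hf'z : ∀ z ∈ ball (0:ℂ) 1, deriv f z ≠ 0)
    (hRe : ∀ z ∈ ball (0:ℂ) 1, z ≠ 0 →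
      0 < (((f z / z) ^ ((α : ℂ) - 1)) * deriv f z).re) :
    ∀ r : ℝ, 0 < r → r < 1 → ∀ θ₁ θ₂ : ℝ, θ₁ < θ₂ → θ₂ - θ₁ ≤ 2 * π →
      -π < ∫ θ in θ₁..θ₂,
        ((1 + ((r : ℂ) * Complex.exp (θ * Complex.I)) *
            deriv (deriv f) ((r : ℂ) * Complex.exp (θ * Complex.I)) /
            deriv f ((r : ℂ) * Complex.exp (θ * Complex.I))).re +
          (α - 1) * ((((r : ℂ) * Complex.exp (θ * Complex.I)) *
            deriv f ((r : ℂ) * Complex.exp (θ * Complex.I)) /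
            f ((r : ℂ) * Complex.exp (θ * Complex.I))).re)) := by
  have hα0 : (0:ℝ) < α := lt_trans one_pos hα
  have hball0 : (0:ℂ) ∈ ball (0:ℂ) 1 := by simp
  have hfa : AnalyticOnNhd ℂ f (ball 0 1) := (isOpen_ball.analyticOn_iff_analyticOnNhd).mp hf
  have hfd : ∀ z ∈ ball (0:ℂ) 1, DifferentiableAt ℂ f z := fun z hz => (hfa z hz).differentiableAt
  have hD : ∀ z ∈ ball (0:ℂ) 1, DifferentiableAt ℂ (deriv f) z := fun z hz =>
    (hfa.deriv z hz).differentiableAt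
  have hD2 : ∀ z ∈ ball (0:ℂ) 1, DifferentiableAt ℂ (deriv (deriv f)) z := fun z hz =>
    ((hfa.deriv).deriv z hz).differentiableAt
  set q : ℂ → ℂ := dslope f 0 with hqdef
  have hq0 : q 0 = 1 := by rw [hqdef, dslope_same]; exact hf'0
  have hq_eqz : ∀ z : ℂ, z ≠ 0 → q z = f z / z := by
    intro z hz
    rw [hqdef, dslope_of_ne f hz, slope_def_field, hf0]
    rw [sub_zero, sub_zero]
  have hq_diff : ∀ z ∈ ball (0:ℂ) 1, DifferentiableAt ℂ q z := by
    intro z hz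
    rcases eq_or_ne z 0 with rfl | hz0
    · obtain ⟨p, hp⟩ := hfa 0 hball0
      exact (hp.has_fpower_series_dslope_fslope.analyticAt).differentiableAt
    · exact (differentiableAt_dslope_of_ne hz0).mpr (hfd z hz)
  have hq_ne : ∀ z ∈ ball (0:ℂ) 1, q z ≠ 0 := by
    intro z hz
    rcases eq_or_ne z 0 with rfl | hz0
    · rw [hq0]; exact one_ne_zero
    · rw [hq_eqz z hz0]; exact hfz z hz hz0
  have hfq : ∀ z : ℂ, f z = z * q z := by
    intro z
    rcases eq_or_ne z 0 with rfl | hz0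
    · rw [hf0]; ring
    · rw [hq_eqz z hz0]; field_simp
  have hf'_eq : ∀ z ∈ ball (0:ℂ) 1, deriv f z = q z + z * deriv q z := by
    intro z hz
    have h1 : f = fun w => w * q w := funext hfq
    calc deriv f z = deriv (fun w => w * q w) z := by rw [← h1]
    _ = q z + z * deriv q z := by
        have h2 := ((hasDerivAt_id z).mul ((hq_diff z hz).hasDerivAt)).deriv
        exact h2.trans (by simp)
  have hgRe : ∀ z ∈ ball (0:ℂ) 1, z ≠ 0 → 0 < ((q z) ^ ((α:ℂ)-1) * deriv f z).re := by
    intro z hz hz0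
    rw [hq_eqz z hz0]
    exact hRe z hz hz0
  have hqre := q_repos hα hq_diff hq0 hq_ne hf'_eq hD hgRe
  intro r hr0 hr1 θ₁ θ₂ hθ hθ2
  set Z : ℝ → ℂ := fun θ => (r:ℂ) * Complex.exp ((θ:ℂ) * Complex.I) with hZdef
  have hZmem : ∀ θ : ℝ, Z θ ∈ ball (0:ℂ) 1 := by
    intro θ
    rw [hZdef]
    rw [mem_ball_zero_iff, norm_mul,
      Complex.norm_exp]
    simp [abs_of_pos hr0, hr1]
  have hZne : ∀ θ : ℝ, Z θ ≠ 0 := fun θ =>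
    mul_ne_zero (by exact_mod_cast ne_of_gt hr0) (Complex.exp_ne_zero _)
  set g : ℂ → ℂ := fun w => (q w) ^ ((α:ℂ)-1) * deriv f w with hgdef
  have hkey : ∀ θ : ℝ, HasDerivAt (fun t : ℝ => α * t + (Complex.log (g (Z t))).im)
      ((1 + (Z θ) * deriv (deriv f) (Z θ) / deriv f (Z θ)).re
        + (α - 1) * ((Z θ) * deriv f (Z θ) / f (Z θ)).re) θ := by
    intro θ
    have hzmem := hZmem θ
    have hzne := hZne θ
    have hQ : q (Z θ) ≠ 0 := hq_ne _ hzmem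
    have hslit : q (Z θ) ∈ Complex.slitPlane := Or.inl (hqre _ hzmem)
    have hgre : 0 < (g (Z θ)).re := hgRe _ hzmem hzne
    have hgslit : g (Z θ) ∈ Complex.slitPlane := Or.inl hgre
    have hgnz : g (Z θ) ≠ 0 := Complex.slitPlane_ne_zero hgslit
    have hfne : f (Z θ) ≠ 0 := by
      intro hcon
      apply hfz _ hzmem hzne
      rw [hcon]
      exact zero_div _
    have hf'ne := hf'z _ hzmem
    have hE : HasDerivAt (fun t : ℂ => (r:ℂ) * Complex.exp (t * Complex.I))
        (Z θ * Complex.I) (θ:ℂ) := by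
      have h1 : HasDerivAt (fun t : ℂ => t * Complex.I) Complex.I (θ:ℂ) := by
        simpa using (hasDerivAt_id ((θ:ℂ))).mul_const Complex.I
      have h3 := h1.cexp.const_mul (r:ℂ)
      refine h3.congr_deriv ?_
      rw [hZdef]
      ring
    have hqc : HasDerivAt (fun t : ℂ => q ((r:ℂ) * Complex.exp (t * Complex.I)))
        (deriv q (Z θ) * (Z θ * Complex.I)) (θ:ℂ) :=
      HasDerivAt.comp (θ:ℂ) ((hq_diff _ hzmem).hasDerivAt) hE
    have hcp := hqc.cpow_const (c := (α:ℂ)-1) hslit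
    have hdf : HasDerivAt (fun t : ℂ => deriv f ((r:ℂ) * Complex.exp (t * Complex.I)))
        (deriv (deriv f) (Z θ) * (Z θ * Complex.I)) (θ:ℂ) :=
      by have := HasDerivAt.comp (θ:ℂ) ((hD _ hzmem).hasDerivAt) hE; exact this
    have hgd := hcp.mul hdf
    have hlog := hgd.clog hgslit
    have hreal := hlog.comp_ofReal
    have him := hd_im hreal
    have hlin : HasDerivAt (fun t : ℝ => α * t) α θ := by
      simpa using (hasDerivAt_id θ).const_mul α
    have hsum := hlin.add him
    refine hsum.congr_deriv ?_
    symm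
    -- value identity
    have hq2 : deriv q (Z θ) = (deriv f (Z θ) - q (Z θ)) / (Z θ) := by
      rw [eq_div_iff hzne]
      have := hf'_eq _ hzmem
      linear_combination -this
    have hcpow1 : (q (Z θ)) ^ ((α:ℂ)-1-1) = (q (Z θ)) ^ ((α:ℂ)-1) / q (Z θ) := by
      rw [Complex.cpow_sub _ _ hQ, Complex.cpow_one]
    have hcne : (q (Z θ)) ^ ((α:ℂ)-1) ≠ 0 := left_ne_zero_of_mul hgnz
    have hDiv : (((α:ℂ)-1) * (q (Z θ)) ^ ((α:ℂ)-1-1) * (deriv q (Z θ) * (Z θ * Complex.I))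
          * deriv f (Z θ)
          + (q (Z θ)) ^ ((α:ℂ)-1) * (deriv (deriv f) (Z θ) * (Z θ * Complex.I)))
          / g (Z θ)
        = Complex.I * (Z θ * deriv (deriv f) (Z θ) / deriv f (Z θ)
            + ((α:ℂ)-1) * (Z θ * deriv f (Z θ) / f (Z θ) - 1)) := by
      rw [hcpow1, hq2, hfq (Z θ)]
      have hgval : g (Z θ) = (q (Z θ)) ^ ((α:ℂ)-1) * deriv f (Z θ) := rfl
      rw [hgval]
      field_simp
      ring
    show _ = α + ((((α:ℂ)-1) * (q (Z θ)) ^ ((α:ℂ)-1-1) * (deriv q (Z θ) * (Z θ * Complex.I))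
          * deriv f (Z θ)
          + (q (Z θ)) ^ ((α:ℂ)-1) * (deriv (deriv f) (Z θ) * (Z θ * Complex.I)))
          / g (Z θ)).im
    rw [hDiv]
    have hcast : ((α:ℂ) - 1) = ((α - 1 : ℝ) : ℂ) := by push_cast; ring
    rw [hcast]
    simp only [Complex.mul_im, Complex.I_re, Complex.I_im, Complex.add_re, Complex.add_im,
      Complex.sub_re, Complex.sub_im, Complex.one_re, Complex.one_im, Complex.ofReal_re,
      Complex.ofReal_im, Complex.mul_re]
    ring
  have hIcont : Continuous (fun θ : ℝ => (1 + (Z θ) * deriv (deriv f) (Z θ) / deriv f (Z θ)).re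
      + (α - 1) * ((Z θ) * deriv f (Z θ) / f (Z θ)).re) := by
    have hZc : Continuous Z := by
      rw [hZdef]
      exact continuous_const.mul ((Complex.continuous_ofReal.mul continuous_const).cexp)
    rw [continuous_iff_continuousAt]
    intro θ
    have hzmem := hZmem θ
    have hc1 : ContinuousAt (fun θ : ℝ => deriv f (Z θ)) θ :=
      ContinuousAt.comp (g := deriv f) (f := Z) ((hD _ hzmem).continuousAt) hZc.continuousAt
    have hc2 : ContinuousAt (fun θ : ℝ => deriv (deriv f) (Z θ)) θ :=
      ContinuousAt.comp (g := deriv (deriv f)) (f := Z) ((hD2 _ hzmem).continuousAt)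
        hZc.continuousAt
    have hc3 : ContinuousAt (fun θ : ℝ => f (Z θ)) θ :=
      ContinuousAt.comp (g := f) (f := Z) ((hfd _ hzmem).continuousAt) hZc.continuousAt
    have hfne : f (Z θ) ≠ 0 := by
      intro hcon
      apply hfz _ hzmem (hZne θ)
      rw [hcon]
      exact zero_div _
    apply ContinuousAt.add
    · apply Complex.continuous_re.continuousAt.comp
      exact continuousAt_const.add ((hZc.continuousAt.mul hc2).div hc1 (hf'z _ hzmem))
    · apply ContinuousAt.mul continuousAt_const
      apply Complex.continuous_re.continuousAt.comp
      exact (hZc.continuousAt.mul hc1).div hc3 hfne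
  have hInt : IntervalIntegrable (fun θ : ℝ =>
      (1 + (Z θ) * deriv (deriv f) (Z θ) / deriv f (Z θ)).re
        + (α - 1) * ((Z θ) * deriv f (Z θ) / f (Z θ)).re) MeasureTheory.volume θ₁ θ₂ :=
    hIcont.intervalIntegrable θ₁ θ₂
  have hFTC := intervalIntegral.integral_eq_sub_of_hasDerivAt
    (f := fun t : ℝ => α * t + (Complex.log (g (Z t))).im) (fun θ _ => hkey θ) hInt
  have hb : ∀ θ : ℝ, |(Complex.log (g (Z θ))).im| < π/2 := by
    intro θ
    rw [Complex.log_im]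
    exact Complex.abs_arg_lt_pi_div_two_iff.mpr (Or.inl (hgRe _ (hZmem θ) (hZne θ)))
  have h1 := abs_lt.mp (hb θ₁)
  have h2 := abs_lt.mp (hb θ₂)
  have h3 : 0 < α * (θ₂ - θ₁) := mul_pos hα0 (by linarith)
  have h4 : α * θ₂ - α * θ₁ = α * (θ₂ - θ₁) := by ring
  have hlt : -π < (fun t : ℝ => α * t + (Complex.log (g (Z t))).im) θ₂
      - (fun t : ℝ => α * t + (Complex.log (g (Z t))).im) θ₁ := by
    simp only []
    linarith [h1.1, h1.2, h2.1, h2.2]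
  exact lt_of_lt_of_eq hlt hFTC.symm

end
end

section
/- Let 0 < β < 1 and let F ∈ C_I(β), i.e. F is analytic on the unit disk with F(0)=0 and F'(z) = p(z)^β for some Carathéodory function p (principal power). Then for every 0 < r < 1 and θ_1 < θ_2 with θ_2 − θ_1 ≤ 2π, ∫_{θ_1}^{θ_2} Re(1 + z F''(z)/F'(z)) dθ > −βπ, where z = r e^{iθ}. -/
open Complex Metric Real

private lemma hasDerivAt_complex_re {q : ℝ → ℂ} {q' : ℂ} {θ : ℝ} (h : HasDerivAt q q' θ) :
    HasDerivAt (fun t => (q t).re) q'.re θ := by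
  exact Complex.reCLM.hasFDerivAt.comp_hasDerivAt θ h

private lemma hasDerivAt_complex_im {q : ℝ → ℂ} {q' : ℂ} {θ : ℝ} (h : HasDerivAt q q' θ) :
    HasDerivAt (fun t => (q t).im) q'.im θ := by
  exact Complex.imCLM.hasFDerivAt.comp_hasDerivAt θ h

/-- for `F ∈ C_I(β)` with `0 < β < 1` (so `F' = p^β` for a Carathéodory
function `p`), the arc integral of `Re(1 + zF''/F')` over any arc of the circle `|z| = r`
of length at most `2π` is greater than `-βπ`. -/
theorem CI_arc_integral_bound
    (β : ℝ) (hβ0 : 0 < β) (hβ1 : β < 1)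
    (F p : ℂ → ℂ)
    (hF : AnalyticOn ℂ F (ball 0 1))
    (hF0 : F 0 = 0)
    (hp : AnalyticOn ℂ p (ball 0 1))
    (hp0 : p 0 = 1)
    (hRe : ∀ z ∈ ball (0:ℂ) 1, 0 < (p z).re)
    (hF' : ∀ z ∈ ball (0:ℂ) 1, deriv F z = p z ^ (β : ℂ)) :
    ∀ r : ℝ, 0 < r → r < 1 → ∀ θ₁ θ₂ : ℝ, θ₁ < θ₂ → θ₂ - θ₁ ≤ 2 * π →
      -(β * π) < ∫ θ in θ₁..θ₂,
        (1 + ((r : ℂ) * Complex.exp (θ * Complex.I)) *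
            deriv (deriv F) ((r : ℂ) * Complex.exp (θ * Complex.I)) /
            deriv F ((r : ℂ) * Complex.exp (θ * Complex.I))).re := by
  intro r hr0 hr1 θ₁ θ₂ h12 hlen
  have hpN : AnalyticOnNhd ℂ p (ball 0 1) :=
    (isOpen_ball.analyticOn_iff_analyticOnNhd).mp hp
  set c : ℝ → ℂ := fun θ => (r : ℂ) * Complex.exp ((θ : ℂ) * Complex.I) with hc_def
  have hc_mem : ∀ θ : ℝ, c θ ∈ ball (0:ℂ) 1 := by
    intro θ
    have h0 : ((θ : ℂ) * Complex.I).re = 0 := by simp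
    simp only [hc_def, mem_ball_zero_iff]
    rw [norm_mul, Complex.norm_exp, h0,
      Real.exp_zero, mul_one, Complex.norm_real, Real.norm_eq_abs, abs_of_pos hr0]
    exact hr1
  have hpz : ∀ z ∈ ball (0:ℂ) 1, p z ≠ 0 := by
    intro z hz h
    have := hRe z hz
    rw [h] at this
    simp at this
  have hslit : ∀ z ∈ ball (0:ℂ) 1, p z ∈ Complex.slitPlane := fun z hz =>
    Complex.mem_slitPlane_iff.mpr (Or.inl (hRe z hz))
  have hdp : ∀ z ∈ ball (0:ℂ) 1, HasDerivAt p (deriv p z) z := fun z hz =>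
    (hpN z hz).differentiableAt.hasDerivAt
  have hFd : ∀ z ∈ ball (0:ℂ) 1, HasDerivAt (fun w => p w ^ (β:ℂ))
      ((β:ℂ) * p z ^ ((β:ℂ) - 1) * deriv p z) z := fun z hz =>
    (hdp z hz).cpow_const (hslit z hz)
  have hF'' : ∀ z ∈ ball (0:ℂ) 1,
      deriv (deriv F) z = (β:ℂ) * p z ^ ((β:ℂ) - 1) * deriv p z := by
    intro z hz
    have hev : deriv F =ᶠ[nhds z] fun w => p w ^ (β:ℂ) := by
      filter_upwards [isOpen_ball.mem_nhds hz] with w hw using hF' w hw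
    rw [hev.deriv_eq]
    exact (hFd z hz).deriv
  have hkey : ∀ z ∈ ball (0:ℂ) 1,
      z * deriv (deriv F) z / deriv F z = (β:ℂ) * (z * deriv p z / p z) := by
    intro z hz
    have hne := hpz z hz
    have hpow : p z ^ (β:ℂ) ≠ 0 := by
      rw [Ne, Complex.cpow_eq_zero_iff]
      tauto
    rw [hF'' z hz, hF' z hz, Complex.cpow_sub _ _ hne, Complex.cpow_one]
    field_simp
  -- the integrand
  set G : ℝ → ℝ := fun θ =>
    (1 + c θ * deriv (deriv F) (c θ) / deriv F (c θ)).re with hG_def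
  have hGval : ∀ θ : ℝ, G θ = 1 + β * ((c θ * deriv p (c θ) / p (c θ)).re) := by
    intro θ
    rw [hG_def]
    simp only
    rw [hkey _ (hc_mem θ), Complex.add_re, Complex.one_re, Complex.mul_re]
    simp
  -- the derivative of c
  have hc' : ∀ θ : ℝ, HasDerivAt c (c θ * Complex.I) θ := by
    intro θ
    have h1 : HasDerivAt (fun w : ℂ => (r:ℂ) * Complex.exp (w * Complex.I))
        ((r:ℂ) * Complex.exp ((θ:ℂ) * Complex.I) * Complex.I) (θ:ℂ) := by
      have h2 := (((hasDerivAt_id ((θ:ℂ))).mul_const Complex.I).cexp).const_mul (r:ℂ)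
      simp only [id_eq, one_mul] at h2
      rw [mul_assoc]
      exact h2
    simpa [hc_def] using h1.comp_ofReal
  have hq : ∀ θ : ℝ, HasDerivAt (fun t => p (c t))
      (deriv p (c θ) * (c θ * Complex.I)) θ :=
    fun θ => (hdp (c θ) (hc_mem θ)).comp θ (hc' θ)
  -- the primitive
  set φ : ℝ → ℝ := fun θ => θ + β * Real.arctan ((p (c θ)).im / (p (c θ)).re) with hφ_def
  have hφ : ∀ θ : ℝ, HasDerivAt φ (G θ) θ := by
    intro θ
    have hu : HasDerivAt (fun t => (p (c t)).re)
        ((deriv p (c θ) * (c θ * Complex.I)).re) θ := hasDerivAt_complex_re (hq θ)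
    have hv : HasDerivAt (fun t => (p (c t)).im)
        ((deriv p (c θ) * (c θ * Complex.I)).im) θ := hasDerivAt_complex_im (hq θ)
    have hu0 : (p (c θ)).re ≠ 0 := ne_of_gt (hRe _ (hc_mem θ))
    have harct := (hv.div hu hu0).arctan
    have final := (hasDerivAt_id θ).add (harct.const_mul β)
    have heq : G θ = id θ ^ 0 *
        (1 + β * (1 / (1 + ((p (c θ)).im / (p (c θ)).re) ^ 2) *
          (((deriv p (c θ) * (c θ * Complex.I)).im * (p (c θ)).re -
            (p (c θ)).im * (deriv p (c θ) * (c θ * Complex.I)).re) / (p (c θ)).re ^ 2))) := by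
      rw [hGval θ]
      set z := c θ
      set w := deriv p z
      set q := p z with hq_def
      have hu0' : q.re ≠ 0 := hu0
      have hupos : 0 < q.re := hRe _ (hc_mem θ)
      have hns : 0 < q.re ^ 2 + q.im ^ 2 := by positivity
      have hexp : (z * w / q).re =
          ((z * w).re * q.re + (z * w).im * q.im) / (q.re ^ 2 + q.im ^ 2) := by
        rw [Complex.div_re, Complex.normSq_apply]
        ring
      have h1 : (w * (z * Complex.I)).re = -((z * w).im) := by
        simp [Complex.mul_re, Complex.mul_im]
        ring
      have h2 : (w * (z * Complex.I)).im = (z * w).re := by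
        simp [Complex.mul_re, Complex.mul_im]
        ring
      rw [hexp, h1, h2]
      have hd1 : (1 : ℝ) + (q.im / q.re) ^ 2 ≠ 0 := by positivity
      simp only [pow_zero, id_eq, one_mul]
      field_simp
      ring
    rw [heq]
    simp at final ⊢
    exact final
  -- continuity of the integrand
  have hc_cont : Continuous c := by
    apply Continuous.mul continuous_const
    exact Complex.continuous_exp.comp ((Complex.continuous_ofReal).mul continuous_const)
  have hpc_cont : Continuous fun θ => p (c θ) :=
    hpN.continuousOn.comp_continuous hc_cont hc_mem
  have hdpc_cont : Continuous fun θ => deriv p (c θ) :=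
    (hpN.deriv).continuousOn.comp_continuous hc_cont hc_mem
  have hGcont : Continuous G := by
    have : G = fun θ => 1 + β * ((c θ * deriv p (c θ) / p (c θ)).re) := funext hGval
    rw [this]
    apply continuous_const.add
    apply continuous_const.mul
    exact Complex.continuous_re.comp
      (((hc_cont.mul hdpc_cont).div hpc_cont fun θ => hpz _ (hc_mem θ)))
  have hInt : IntervalIntegrable G MeasureTheory.volume θ₁ θ₂ :=
    hGcont.intervalIntegrable _ _
  have hFTC : ∫ θ in θ₁..θ₂, G θ = φ θ₂ - φ θ₁ :=
    intervalIntegral.integral_eq_sub_of_hasDerivAt (fun t _ => hφ t) hInt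
  show -(β * π) < ∫ θ in θ₁..θ₂, G θ
  rw [hFTC]
  have a1 := Real.arctan_lt_pi_div_two ((p (c θ₁)).im / (p (c θ₁)).re)
  have a2 := Real.neg_pi_div_two_lt_arctan ((p (c θ₂)).im / (p (c θ₂)).re)
  simp only [hφ_def]
  nlinarith [mul_pos hβ0 (show (0:ℝ) <
    Real.arctan ((p (c θ₂)).im / (p (c θ₂)).re) -
      Real.arctan ((p (c θ₁)).im / (p (c θ₁)).re) + π by linarith)]
end

section
/- Let α > 0 and let f ∈ B_1(α) with ψ(z) = (f(z)/z)^α = 1 + Σ A_n z^n, and let G(z) = 1 + Σ_{n≥1} (2α/(n+α)) z^n. Then ψ is dominated coefficientwise by G: |A_n| ≤ (n-th coefficient of G) = 2α/(n+α) for all n ≥ 1, and moreover z ψ'(z) + α ψ(z) is subordinate to z G'(z) + α G(z) = α(1+z)/(1-z) on the unit disk. -/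
section Helpers
open Complex Metric MeasureTheory Real Set


noncomputable def circInt (g : ℝ → ℂ) : ℂ := ∫ θ in Ioc (0:ℝ) (2*π), g θ

lemma expInt (m : ℤ) : circInt (fun θ => exp (m * θ * I)) = if m = 0 then (2*π:ℝ) else 0 := by
  have h2π : (0:ℝ) ≤ 2*π := by positivity
  rw [circInt, ← intervalIntegral.integral_of_le h2π]
  rcases eq_or_ne m 0 with hm | hm
  · simp [hm]
  · have hc : ((m:ℂ) * I) ≠ 0 := by
      simp [Complex.ext_iff, hm]
    have : ∀ θ : ℝ, Complex.exp ((m:ℂ) * θ * I) = Complex.exp (((m:ℂ)*I) * θ) := by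
      intro θ; ring_nf
    simp_rw [this]
    rw [integral_exp_mul_complex hc]
    simp [hm]
    have h3 : (m:ℂ) * I * (2 * (π:ℂ)) = (m:ℤ) * (2*(π:ℂ)*I) := by push_cast; ring
    rw [h3, Complex.exp_int_mul_two_pi_mul_I]; ring


lemma circInt_const_mul (a : ℂ) (g : ℝ → ℂ) : circInt (fun θ => a * g θ) = a * circInt g := by
  simp [circInt, integral_const_mul]

lemma circInt_series (c : ℕ → ℂ) (r : ℝ) (hr : 0 < r)
    (hsum : Summable fun k => ‖c k‖ * r ^ k) (m : ℤ) :
    circInt (fun θ => (∑' k : ℕ, c k * (r * exp (θ * I)) ^ k) * exp (m * θ * I))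
      = 2 * (π:ℝ) * ∑' k : ℕ, (if (k:ℤ) + m = 0 then c k * (r:ℂ) ^ k else 0) := by
  have key : ∀ (k : ℕ) (θ : ℝ), c k * ((r:ℂ) * exp (θ * I)) ^ k * exp (m * θ * I)
      = (c k * (r:ℂ) ^ k) * exp ((((k:ℤ) + m : ℤ) : ℂ) * θ * I) := by
    intro k θ
    have h1 : Complex.exp ((k:ℂ) * (θ*I)) * Complex.exp ((m:ℂ)*θ*I)
        = Complex.exp ((((k:ℤ) + m : ℤ):ℂ) * θ * I) := by
      rw [← Complex.exp_add]; push_cast; ring_nf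
    rw [mul_pow, ← Complex.exp_nat_mul, ← h1]; ring
  have hre : ∀ (k : ℕ) (θ : ℝ), ((((k:ℤ) + m : ℤ) : ℂ) * θ * I).re = 0 := by
    intro k θ
    simp [Complex.mul_re]
  have hcont : ∀ k : ℕ, Continuous fun θ : ℝ =>
      (c k * (r:ℂ) ^ k) * exp ((((k:ℤ) + m : ℤ) : ℂ) * θ * I) := by
    intro k; fun_prop
  have hnorm : ∀ (k : ℕ) (θ : ℝ),
      ‖(c k * (r:ℂ) ^ k) * exp ((((k:ℤ) + m : ℤ) : ℂ) * θ * I)‖ = ‖c k‖ * r ^ k := by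
    intro k θ
    rw [norm_mul, norm_mul]
    rw [Complex.norm_exp, hre, Real.exp_zero]
    simp [abs_of_pos hr]
  have interchange : circInt (fun θ => ∑' k : ℕ, (c k * (r:ℂ) ^ k) * exp ((((k:ℤ) + m : ℤ) : ℂ) * θ * I))
      = ∑' k : ℕ, circInt (fun θ => (c k * (r:ℂ) ^ k) * exp ((((k:ℤ) + m : ℤ) : ℂ) * θ * I)) := by
    rw [circInt, ← MeasureTheory.integral_tsum_of_summable_integral_norm]
    · rfl
    · intro k
      exact ((hcont k).integrableOn_Ioc)
    · have heq : (fun k : ℕ => ∫ θ in Ioc (0:ℝ) (2*π),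
          ‖(c k * (r:ℂ) ^ k) * exp ((((k:ℤ) + m : ℤ) : ℂ) * θ * I)‖)
          = fun k : ℕ => (2*π) * (‖c k‖ * r ^ k) := by
        funext k
        simp only [hnorm]
        rw [setIntegral_const]
        simp [Real.volume_Ioc, ENNReal.toReal_ofReal (by positivity : (0:ℝ) ≤ 2*π), Real.pi_pos.le]
        try ring
      rw [heq]
      exact hsum.mul_left _
  calc circInt (fun θ => (∑' k : ℕ, c k * (r * exp (θ * I)) ^ k) * exp (m * θ * I))
      = circInt (fun θ => ∑' k : ℕ, (c k * (r:ℂ) ^ k) * exp ((((k:ℤ) + m : ℤ) : ℂ) * θ * I)) := by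
        unfold circInt
        apply setIntegral_congr_fun measurableSet_Ioc
        intro θ _
        dsimp only
        rw [← tsum_mul_right]
        exact tsum_congr fun k => key k θ
    _ = ∑' k : ℕ, circInt (fun θ => (c k * (r:ℂ) ^ k) * exp ((((k:ℤ) + m : ℤ) : ℂ) * θ * I)) :=
        interchange
    _ = ∑' k : ℕ, (c k * (r:ℂ) ^ k) * (if ((k:ℤ) + m : ℤ) = 0 then (2*π:ℝ) else 0) := by
        refine tsum_congr fun k => ?_
        rw [circInt_const_mul, expInt]
    _ = 2 * (π:ℝ) * ∑' k : ℕ, (if (k:ℤ) + m = 0 then c k * (r:ℂ) ^ k else 0) := by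
        rw [← tsum_mul_left]
        refine tsum_congr fun k => ?_
        split_ifs <;> simp <;> ring


lemma circInt_add (f g : ℝ → ℂ) (hf : Continuous f) (hg : Continuous g) :
    circInt (fun θ => f θ + g θ) = circInt f + circInt g :=
  integral_add hf.integrableOn_Ioc hg.integrableOn_Ioc

lemma circInt_conj (f : ℝ → ℂ) :
    circInt (fun θ => (starRingEnd ℂ) (f θ)) = (starRingEnd ℂ) (circInt f) :=
  integral_conj

lemma circInt_congr {f g : ℝ → ℂ} (h : ∀ θ, f θ = g θ) : circInt f = circInt g := by
  unfold circInt
  exact setIntegral_congr_fun measurableSet_Ioc fun θ _ => h θ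

lemma caratheodory (h : ℂ → ℂ) (c : ℕ → ℂ) (r : ℝ) (hr0 : 0 < r)
    (hcont : Continuous fun θ : ℝ => h ((r:ℂ) * exp (θ * I)))
    (hrep : ∀ θ : ℝ, h ((r:ℂ) * exp (θ * I)) = ∑' k : ℕ, c k * ((r:ℂ) * exp (θ * I)) ^ k)
    (hsum : Summable fun k => ‖c k‖ * r ^ k)
    (hpos : ∀ θ : ℝ, 0 ≤ (h ((r:ℂ) * exp (θ * I))).re)
    (n : ℕ) (hn : 1 ≤ n) : ‖c n‖ * r ^ n ≤ 2 * (c 0).re := by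
  set H : ℝ → ℂ := fun θ => h ((r:ℂ) * exp (θ * I)) with hH
  have hser : ∀ m : ℤ, circInt (fun θ => H θ * exp (m * θ * I))
      = 2 * (π:ℝ) * ∑' k : ℕ, (if (k:ℤ) + m = 0 then c k * (r:ℂ) ^ k else 0) := by
    intro m
    rw [← circInt_series c r hr0 hsum m]
    exact circInt_congr fun θ => by rw [hH]; dsimp only; rw [hrep θ]
  have I1 : circInt (fun θ => H θ * exp ((-(n:ℤ) : ℤ) * θ * I)) = 2 * (π:ℝ) * (c n * (r:ℂ)^n) := by
    rw [hser]
    congr 1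
    rw [tsum_eq_single n]
    · simp
    · intro k hk
      have : ¬ ((k:ℤ) + -(n:ℤ) = 0) := by omega
      simp only [this, if_false]
  have I2 : circInt (fun θ => H θ * exp (((n:ℤ) : ℂ) * θ * I)) = 0 := by
    rw [show (((n:ℤ) : ℂ)) = (((n:ℤ) : ℤ) : ℂ) by norm_cast, hser]
    have hz : ∀ k : ℕ, (if (k:ℤ) + (n:ℤ) = 0 then c k * (r:ℂ) ^ k else 0) = 0 := by
      intro k
      have : ¬ ((k:ℤ) + (n:ℤ) = 0) := by omega
      simp only [this, if_false]
    simp [hz]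
  have I0 : circInt H = 2 * (π:ℝ) * c 0 := by
    have h0 := hser 0
    simp only [Int.cast_zero, zero_mul, Complex.exp_zero, mul_one] at h0
    rw [h0, tsum_eq_single 0]
    · simp
    · intro k hk
      have : ¬ ((k:ℤ) + 0 = 0) := by omega
      simp only [this, if_false]
  have hconjexp : ∀ θ : ℝ, (starRingEnd ℂ) (H θ * exp (((n:ℤ):ℂ) * θ * I))
      = (starRingEnd ℂ) (H θ) * exp ((-(n:ℤ) : ℤ) * θ * I) := by
    intro θ
    rw [map_mul, ← Complex.exp_conj]
    congr 1
    simp only [map_mul, Complex.conj_I, map_intCast, Complex.conj_ofReal]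
    push_cast
    ring
  have hcontH : Continuous H := hcont
  have hcontconj : Continuous fun θ => (starRingEnd ℂ) (H θ) :=
    Complex.continuous_conj.comp hcontH
  have J : circInt (fun θ => (starRingEnd ℂ) (H θ) * exp ((-(n:ℤ) : ℤ) * θ * I)) = 0 := by
    have e1 : circInt (fun θ => (starRingEnd ℂ) (H θ * exp (((n:ℤ):ℂ) * θ * I)))
        = (starRingEnd ℂ) (circInt (fun θ => H θ * exp (((n:ℤ):ℂ) * θ * I))) :=
      circInt_conj _
    rw [I2, map_zero] at e1
    rw [← circInt_congr hconjexp]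
    exact e1
  have hcont1 : Continuous fun θ : ℝ => H θ * exp (((-(n:ℤ) : ℤ) : ℂ) * θ * I) := by fun_prop
  have hcont2 : Continuous fun θ : ℝ => (starRingEnd ℂ) (H θ) * exp (((-(n:ℤ) : ℤ) : ℂ) * θ * I) := by
    apply hcontconj.mul
    fun_prop
  have K : circInt (fun θ => (((2 * (H θ).re : ℝ)) : ℂ) * exp ((-(n:ℤ) : ℤ) * θ * I))
      = 2 * (π:ℝ) * (c n * (r:ℂ)^n) := by
    have hsplit : ∀ θ : ℝ, (((2 * (H θ).re : ℝ)) : ℂ) * exp ((-(n:ℤ) : ℤ) * θ * I)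
        = H θ * exp ((-(n:ℤ) : ℤ) * θ * I)
          + (starRingEnd ℂ) (H θ) * exp ((-(n:ℤ) : ℤ) * θ * I) := by
      intro θ
      have : (((2 * (H θ).re : ℝ)) : ℂ) = H θ + (starRingEnd ℂ) (H θ) := by
        rw [Complex.add_conj]
      rw [this, add_mul]
    rw [circInt_congr hsplit, circInt_add _ _ hcont1 hcont2, I1, J, add_zero]
  have Kre : (∫ θ in Ioc (0:ℝ) (2*π), 2 * (H θ).re) = 2 * π * (2 * (c 0).re) := by
    have hsplit : ∀ θ : ℝ, (((2 * (H θ).re : ℝ)) : ℂ) = H θ + (starRingEnd ℂ) (H θ) := by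
      intro θ; rw [Complex.add_conj]
    have hc : circInt (fun θ => (((2 * (H θ).re : ℝ)) : ℂ))
        = (((2 * π * (2 * (c 0).re) : ℝ)) : ℂ) := by
      rw [circInt_congr hsplit, circInt_add _ _ hcontH hcontconj, circInt_conj, I0]
      rw [show ((2:ℂ) * (π:ℝ) * c 0) = (((2 * π:ℝ)):ℂ) * c 0 by push_cast; ring]
      rw [map_mul, Complex.conj_ofReal, ← mul_add, Complex.add_conj]
      push_cast
      ring
    have hofReal : circInt (fun θ => (((2 * (H θ).re : ℝ)) : ℂ))
        = (((∫ θ in Ioc (0:ℝ) (2*π), 2 * (H θ).re : ℝ)) : ℂ) := by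
      unfold circInt
      exact integral_ofReal
    rw [hofReal] at hc
    exact_mod_cast hc
  have hnormle : ‖circInt (fun θ => (((2 * (H θ).re : ℝ)) : ℂ) * exp ((-(n:ℤ) : ℤ) * θ * I))‖
      ≤ ∫ θ in Ioc (0:ℝ) (2*π), 2 * (H θ).re := by
    refine le_trans (MeasureTheory.norm_integral_le_integral_norm _) ?_
    apply le_of_eq
    apply setIntegral_congr_fun measurableSet_Ioc
    intro θ _
    dsimp only
    rw [norm_mul]
    have h1 : ‖exp ((((-(n:ℤ)):ℤ):ℂ) * θ * I)‖ = 1 := by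
      rw [Complex.norm_exp]
      have : (((((-(n:ℤ))):ℤ):ℂ) * θ * I).re = 0 := by simp [Complex.mul_re]
      rw [this, Real.exp_zero]
    rw [h1, mul_one, Complex.norm_real, Real.norm_eq_abs, _root_.abs_of_nonneg]
    have := hpos θ
    linarith
  rw [K, Kre] at hnormle
  have hπ : (0:ℝ) < 2 * π := by positivity
  have hre : ((2:ℂ) * (π:ℝ) * (c n * ((r:ℝ):ℂ)^n)) = (((2*π : ℝ)):ℂ) * (c n * ((r:ℝ):ℂ)^n) := by
    push_cast; ring
  rw [hre] at hnormle
  rw [norm_mul, norm_mul, norm_pow] at hnormle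
  rw [Complex.norm_real (2*π), Real.norm_eq_abs, _root_.abs_of_nonneg hπ.le] at hnormle
  rw [Complex.norm_real r, Real.norm_eq_abs, _root_.abs_of_nonneg hr0.le] at hnormle
  nlinarith [hnormle]

lemma rep_exists (ψ : ℂ → ℂ) (hψ : DifferentiableOn ℂ ψ (ball 0 1))
    (s3 : ℝ) (h0 : 0 < s3) (h1 : s3 < 1) :
    ∃ A : ℕ → ℂ, (∀ k, A k = iteratedDeriv k ψ 0 / (k.factorial : ℂ)) ∧
      (∀ z : ℂ, ‖z‖ < s3 → HasSum (fun k => A k * z ^ k) (ψ z)) ∧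
      (∀ s2 : ℝ, 0 ≤ s2 → s2 < s3 → ∃ C, 0 < C ∧ ∀ k, ‖A k‖ * s2 ^ k ≤ C) := by
  set t3 : NNReal := s3.toNNReal with ht3
  have ht3c : (t3 : ℝ) = s3 := Real.coe_toNNReal s3 h0.le
  have hsub : closedBall (0:ℂ) (t3:ℝ) ⊆ ball (0:ℂ) 1 := by
    rw [ht3c]; exact closedBall_subset_ball h1
  have HP : HasFPowerSeriesOnBall ψ (cauchyPowerSeries ψ 0 (t3:ℝ)) 0 t3 :=
    (hψ.mono hsub).hasFPowerSeriesOnBall (by simp [ht3, Real.toNNReal_pos.mpr h0])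
  set P := cauchyPowerSeries ψ 0 (t3:ℝ) with hP
  refine ⟨P.coeff, ?_, ?_, ?_⟩
  · intro k
    have h2 := HP.factorial_smul (1:ℂ) k
    rw [← iteratedDeriv_eq_iteratedFDeriv] at h2
    have h3 : (k.factorial : ℂ) * P.coeff k = iteratedDeriv k ψ 0 := by
      rw [← h2, FormalMultilinearSeries.coeff, nsmul_eq_mul]
      rfl
    rw [← h3, mul_comm, mul_div_assoc, div_self (by exact_mod_cast k.factorial_ne_zero), mul_one]
  · intro z hz
    have hmem : z ∈ Metric.eball (0:ℂ) t3 := by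
      rw [Metric.emetric_ball_nnreal, mem_ball_zero_iff, ht3c]
      exact hz
    have := HP.hasSum hmem
    rw [zero_add] at this
    have e : (fun k => P.coeff k * z ^ k) = fun n => P n fun _ => z := by
      funext k
      rw [FormalMultilinearSeries.apply_eq_pow_smul_coeff, smul_eq_mul]
      ring
    rw [e]; exact this
  · intro s2 hs2 hlt
    have hrad : (s2.toNNReal : ENNReal) < P.radius := by
      apply lt_of_lt_of_le _ HP.r_le
      rw [ENNReal.coe_lt_coe, ht3]
      rw [Real.toNNReal_lt_toNNReal_iff h0]
      exact hlt
    obtain ⟨C, hC, hbound⟩ := P.norm_mul_pow_le_of_lt_radius hrad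
    refine ⟨C, hC, fun k => ?_⟩
    have := hbound k
    rwa [FormalMultilinearSeries.norm_apply_eq_norm_coef, Real.coe_toNNReal s2 hs2] at this

lemma summable_weighted {A : ℕ → ℂ} {C s2 : ℝ} (hC : ∀ k, ‖A k‖ * s2 ^ k ≤ C)
    (hs2 : 0 < s2) {s1 : ℝ} (h10 : 0 ≤ s1) (h12 : s1 < s2) :
    Summable (fun k : ℕ => ((k:ℝ) + 1) * ‖A k‖ * s1 ^ k) := by
  set q : ℝ := s1 / s2 with hq
  have hq0 : 0 ≤ q := by positivity
  have hq1 : q < 1 := by rw [hq, div_lt_one hs2]; exact h12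
  have hsum : Summable (fun k : ℕ => C * (((k:ℝ) + 1) * q ^ k)) := by
    apply Summable.mul_left
    have h1 : Summable (fun k : ℕ => (k:ℝ) * q ^ k) := by
      have := summable_pow_mul_geometric_of_norm_lt_one 1 (r := q) (by rwa [Real.norm_eq_abs, _root_.abs_of_nonneg hq0])
      simpa using this
    have h2 : Summable (fun k : ℕ => q ^ k) := summable_geometric_of_lt_one hq0 hq1
    simpa [add_mul] using h1.add h2
  apply Summable.of_nonneg_of_le (fun k => by positivity) _ hsum
  intro k
  have hAk : ‖A k‖ ≤ C / s2 ^ k := by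
    rw [le_div_iff₀ (by positivity)]
    exact hC k
  calc ((k:ℝ) + 1) * ‖A k‖ * s1 ^ k ≤ ((k:ℝ) + 1) * (C / s2 ^ k) * s1 ^ k := by
        apply mul_le_mul_of_nonneg_right _ (by positivity)
        exact mul_le_mul_of_nonneg_left hAk (by positivity)
    _ = C * (((k:ℝ) + 1) * q ^ k) := by
        rw [hq, div_pow]
        field_simp

lemma coeff_bound (α : ℝ) (hα : 0 < α) (ψ : ℂ → ℂ)
    (hψd : DifferentiableOn ℂ ψ (ball 0 1))
    (hψc : ContinuousOn (fun z => z * deriv ψ z + (α:ℂ) * ψ z) (ball 0 1))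
    (hψ0 : ψ 0 = 1)
    (hpos : ∀ z ∈ ball (0:ℂ) 1, 0 ≤ (z * deriv ψ z + (α:ℂ) * ψ z).re)
    (n : ℕ) (hn : 1 ≤ n) :
    ‖iteratedDeriv n ψ 0 / (n.factorial : ℂ)‖ ≤ 2 * α / (n + α) := by
  set D : ℕ → ℂ := fun k => iteratedDeriv k ψ 0 / (k.factorial : ℂ) with hD
  have key : ∀ r : ℝ, 0 < r → r < 1 → ((n:ℝ) + α) * ‖D n‖ * r ^ n ≤ 2 * α := by
    intro r hr0 hr1
    set s3 : ℝ := (r+1)/2 with hs3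
    set s2 : ℝ := (r+s3)/2 with hs2
    set s1 : ℝ := (r+s2)/2 with hs1
    have hrs1 : r < s1 := by rw [hs1, hs2, hs3]; linarith
    have h12 : s1 < s2 := by rw [hs1, hs2, hs3]; linarith
    have h23 : s2 < s3 := by rw [hs2, hs3]; linarith
    have h31 : s3 < 1 := by rw [hs3]; linarith
    have hs1p : 0 < s1 := lt_trans hr0 hrs1
    obtain ⟨A, hAD, hrep, hbound⟩ := rep_exists ψ hψd s3 (by linarith) h31
    obtain ⟨C, hC0, hCb⟩ := hbound s2 (by linarith) h23
    have hsumW : Summable (fun k : ℕ => ((k:ℝ) + 1) * ‖A k‖ * s1 ^ k) :=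
      summable_weighted hCb (by linarith) hs1p.le h12
    -- derivative of the sum
    have hu : Summable (fun k : ℕ => (k:ℝ) * ‖A k‖ * s1 ^ (k-1)) := by
      apply Summable.of_nonneg_of_le (fun k => by positivity) _ (hsumW.mul_left (1/s1))
      intro k
      cases k with
      | zero => simp; positivity
      | succ m =>
        have : s1 ^ (m + 1 - 1) = s1 ^ m := by norm_num
        rw [this]
        have h1 : (1/s1) * (((m:ℝ) + 1 + 1) * ‖A (m+1)‖ * s1 ^ (m+1)) 
            = ((m:ℝ) + 2) * ‖A (m+1)‖ * s1 ^ m := by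
          rw [pow_succ]
          field_simp
          ring
        push_cast
        rw [h1]
        have : ((m:ℝ) + 1) ≤ (m:ℝ) + 2 := by linarith
        nlinarith [norm_nonneg (A (m+1)), pow_nonneg hs1p.le m]
    have hds : ∀ z : ℂ, ‖z‖ < s1 → HasDerivAt ψ (∑' k : ℕ, (k:ℂ) * A k * z ^ (k-1)) z := by
      intro z hz
      have hg : ∀ (k : ℕ), ∀ y ∈ ball (0:ℂ) s1,
          HasDerivAt (fun y : ℂ => A k * y ^ k) ((k:ℂ) * A k * y ^ (k-1)) y := by
        intro k y _
        have := (hasDerivAt_pow k y).const_mul (A k)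
        have e : (k:ℂ) * A k * y ^ (k-1) = A k * ((k:ℂ) * y ^ (k-1)) := by ring
        rw [e]; exact this
      have hg' : ∀ (k : ℕ), ∀ y ∈ ball (0:ℂ) s1,
          ‖(k:ℂ) * A k * y ^ (k-1)‖ ≤ (k:ℝ) * ‖A k‖ * s1 ^ (k-1) := by
        intro k y hy
        rw [norm_mul, norm_mul, norm_pow, Complex.norm_natCast]
        have hyn : ‖y‖ ≤ s1 := (mem_ball_zero_iff.mp hy).le
        gcongr
      have hsum0 : Summable fun k : ℕ => A k * (0:ℂ) ^ k := by
        apply summable_of_ne_finset_zero (s := {0})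
        intro k hk
        simp at hk
        simp [zero_pow hk]
      have hD := hasDerivAt_tsum_of_isPreconnected hu isOpen_ball
        (convex_ball (0:ℂ) s1).isPreconnected hg hg'
        (mem_ball_self hs1p) hsum0 (mem_ball_zero_iff.mpr hz)
      apply hD.congr_of_eventuallyEq
      apply Filter.eventually_of_mem (isOpen_ball.mem_nhds (mem_ball_zero_iff.mpr hz))
      intro w hw
      exact ((hrep w (lt_trans (mem_ball_zero_iff.mp hw) (lt_trans h12 h23))).tsum_eq).symm
    set c : ℕ → ℂ := fun k => ((k:ℂ) + α) * A k with hc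
    have hnormc : ∀ k : ℕ, ‖c k‖ ≤ ((k:ℝ) + α) * ‖A k‖ := by
      intro k
      rw [hc]
      dsimp only
      rw [norm_mul]
      apply mul_le_mul_of_nonneg_right _ (norm_nonneg _)
      calc ‖(k:ℂ) + (α:ℂ)‖ ≤ ‖(k:ℂ)‖ + ‖(α:ℂ)‖ := norm_add_le _ _
        _ = (k:ℝ) + α := by
          rw [Complex.norm_natCast, Complex.norm_real, Real.norm_eq_abs, _root_.abs_of_pos hα]
    have hsumc : Summable fun k : ℕ => ‖c k‖ * r ^ k := by
      apply Summable.of_nonneg_of_le (fun k => by positivity) _ (hsumW.mul_left (1 + α))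
      intro k
      have h1 : ‖c k‖ * r ^ k ≤ ((k:ℝ) + α) * ‖A k‖ * r ^ k := by
        apply mul_le_mul_of_nonneg_right (hnormc k) (by positivity)
      refine le_trans h1 ?_
      have hrk : r ^ k ≤ s1 ^ k := pow_le_pow_left₀ hr0.le hrs1.le k
      have h2 : ((k:ℝ) + α) ≤ (1 + α) * ((k:ℝ) + 1) := by nlinarith [Nat.cast_nonneg (α := ℝ) k]
      calc ((k:ℝ) + α) * ‖A k‖ * r ^ k ≤ ((k:ℝ) + α) * ‖A k‖ * s1 ^ k := by
            apply mul_le_mul_of_nonneg_left hrk (by positivity)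
        _ ≤ (1 + α) * (((k:ℝ) + 1) * ‖A k‖ * s1 ^ k) := by
            have h3 := mul_le_mul_of_nonneg_right h2
              (by positivity : (0:ℝ) ≤ ‖A k‖ * s1 ^ k)
            nlinarith [h3]
    have hrep_h : ∀ z : ℂ, ‖z‖ < s1 →
        z * deriv ψ z + (α:ℂ) * ψ z = ∑' k : ℕ, c k * z ^ k := by
      intro z hz
      have hdz := (hds z hz).deriv
      have hψz := (hrep z (lt_trans hz (lt_trans h12 h23))).tsum_eq
      rw [hdz, ← hψz]
      have S1 : Summable fun k : ℕ => (k:ℂ) * A k * z ^ k := by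
        apply Summable.of_norm
        apply Summable.of_nonneg_of_le (fun k => by positivity) _ hsumW
        intro k
        rw [norm_mul, norm_mul, norm_pow, Complex.norm_natCast]
        have hk1 : (k:ℝ) ≤ (k:ℝ) + 1 := by linarith
        gcongr
      have S2 : Summable fun k : ℕ => (α:ℂ) * (A k * z ^ k) :=
        ((hrep z (lt_trans hz (lt_trans h12 h23))).summable).mul_left _
      have e1 : z * ∑' k : ℕ, (k:ℂ) * A k * z ^ (k-1) = ∑' k : ℕ, (k:ℂ) * A k * z ^ k := by
        rw [← tsum_mul_left]
        apply tsum_congr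
        intro k
        cases k with
        | zero => simp
        | succ m =>
          have : m + 1 - 1 = m := rfl
          rw [this, pow_succ]
          ring
      have e2 : (α:ℂ) * ∑' k : ℕ, A k * z ^ k = ∑' k : ℕ, (α:ℂ) * (A k * z ^ k) := by
        rw [← tsum_mul_left]
      rw [e1, e2, ← Summable.tsum_add S1 S2]
      apply tsum_congr
      intro k
      rw [hc]
      dsimp only
      ring
    -- apply caratheodory
    have hmem : ∀ θ : ℝ, ((r:ℂ) * Complex.exp (θ * I)) ∈ ball (0:ℂ) 1 := by
      intro θ
      rw [mem_ball_zero_iff, norm_mul, Complex.norm_real, Real.norm_eq_abs, _root_.abs_of_pos hr0]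
      have : ‖Complex.exp ((θ:ℂ) * I)‖ = 1 := by
        rw [Complex.norm_exp]
        simp [Complex.mul_re]
      rw [this, mul_one]
      exact hr1
    have hnorm_circ : ∀ θ : ℝ, ‖(r:ℂ) * Complex.exp (θ * I)‖ = r := by
      intro θ
      rw [norm_mul, Complex.norm_real, Real.norm_eq_abs, _root_.abs_of_pos hr0]
      have : ‖Complex.exp ((θ:ℂ) * I)‖ = 1 := by
        rw [Complex.norm_exp]
        simp [Complex.mul_re]
      rw [this, mul_one]
    have hcara := caratheodory (fun z => z * deriv ψ z + (α:ℂ) * ψ z) c r hr0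
      (by
        apply hψc.comp_continuous (by fun_prop) hmem)
      (fun θ => hrep_h _ (by rw [hnorm_circ θ]; exact hrs1))
      hsumc
      (fun θ => hpos _ (hmem θ))
      n hn
    -- compute c 0
    have hA0 : A 0 = 1 := by
      have h00 := hrep 0 (by simp; linarith)
      have h01 : HasSum (fun k : ℕ => A k * (0:ℂ) ^ k) (A 0) := by
        have := hasSum_single (f := fun k : ℕ => A k * (0:ℂ) ^ k) 0 (by
          intro k hk
          simp [zero_pow hk])
        simpa using this
      rw [hψ0] at h00
      exact h01.unique h00
    have hc0 : (c 0).re = α := by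
      rw [hc]
      simp [hA0]
    rw [hc0] at hcara
    -- lower bound for ‖c n‖
    have hcn : ‖c n‖ = ((n:ℝ) + α) * ‖A n‖ := by
      rw [hc]
      dsimp only
      rw [norm_mul]
      congr 1
      rw [show ((n:ℂ) + (α:ℂ)) = (((n:ℝ) + α : ℝ) : ℂ) by push_cast; ring]
      rw [Complex.norm_real, Real.norm_eq_abs, _root_.abs_of_pos (by positivity)]
    rw [hcn] at hcara
    rw [hAD n] at hcara
    have hDn : D n = iteratedDeriv n ψ 0 / (n.factorial : ℂ) := rfl
    rw [hDn]
    linarith [hcara]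
  -- limit r → 1
  have hten : Filter.Tendsto (fun r : ℝ => ((n:ℝ) + α) * ‖D n‖ * r ^ n)
      (nhdsWithin 1 (Iio 1)) (nhds (((n:ℝ) + α) * ‖D n‖)) := by
    have : Filter.Tendsto (fun r : ℝ => ((n:ℝ) + α) * ‖D n‖ * r ^ n)
        (nhds 1) (nhds (((n:ℝ) + α) * ‖D n‖ * 1 ^ n)) := by
      apply Filter.Tendsto.mul tendsto_const_nhds
      exact (continuous_pow n).tendsto 1
    simpa using this.mono_left nhdsWithin_le_nhds
  have hev : ∀ᶠ r in nhdsWithin 1 (Iio 1), ((n:ℝ) + α) * ‖D n‖ * r ^ n ≤ 2 * α := by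
    apply Filter.eventually_of_mem (Ioo_mem_nhdsLT_of_mem (show (1:ℝ) ∈ Ioc (0:ℝ) 1 by norm_num))
    intro r hr
    exact key r hr.1 hr.2
  have hfin : ((n:ℝ) + α) * ‖D n‖ ≤ 2 * α := le_of_tendsto hten hev
  rw [le_div_iff₀ (by positivity : (0:ℝ) < (n:ℝ) + α)]
  linarith [hfin]

end Helpers


section Main
open Complex Metric Set


lemma deriv_ident (α : ℝ) (f ψ : ℂ → ℂ)
    (hf : AnalyticOnNhd ℂ f (ball 0 1))
    (hψ : AnalyticOnNhd ℂ ψ (ball 0 1))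
    (hfz : ∀ z ∈ ball (0:ℂ) 1, z ≠ 0 → f z / z ≠ 0)
    (hψf : ∀ z ∈ ball (0:ℂ) 1, z ≠ 0 → ψ z = (f z / z) ^ (α:ℂ))
    {z₀ : ℂ} (hz₀ : z₀ ∈ ball (0:ℂ) 1) (hz0 : z₀ ≠ 0) :
    z₀ * deriv ψ z₀ + (α:ℂ) * ψ z₀
      = (α:ℂ) * (((f z₀ / z₀) ^ ((α : ℂ) - 1)) * deriv f z₀) := by
  set u : ℂ → ℂ := fun z => f z / z with hu
  set c : ℂ := u z₀ with hcdef
  have hc : c ≠ 0 := hfz z₀ hz₀ hz0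
  have hfne : f z₀ ≠ 0 := by
    intro h
    apply hc
    rw [hcdef, hu]
    simp [h]
  -- a neighborhood where everything is nice
  have hWnhds : {z : ℂ | z ∈ ball (0:ℂ) 1 ∧ z ≠ 0 ∧ 0 < (u z / c).re} ∈ nhds z₀ := by
    have h1 : ∀ᶠ z in nhds z₀, z ∈ ball (0:ℂ) 1 := isOpen_ball.eventually_mem hz₀
    have h2 : ∀ᶠ z in nhds z₀, z ≠ 0 :=
      (isOpen_compl_singleton).eventually_mem (show z₀ ∈ ({0}ᶜ : Set ℂ) from hz0)
    have hcont : ContinuousAt (fun z => (u z / c).re) z₀ := by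
      apply Complex.continuous_re.continuousAt.comp
      apply ContinuousAt.div_const
      rw [hu]
      exact ((hf z₀ hz₀).continuousAt.div continuousAt_id hz0)
    have h3 : ∀ᶠ z in nhds z₀, 0 < (u z / c).re := by
      have he : (u z₀ / c).re = 1 := by rw [← hcdef, div_self hc]; simp
      exact hcont.eventually (lt_mem_nhds (by rw [he]; norm_num : (0:ℝ) < (u z₀ / c).re))
    filter_upwards [h1, h2, h3] with z hz1 hz2 hz3
    exact ⟨hz1, hz2, hz3⟩
  obtain ⟨ε, hε, hball⟩ := Metric.mem_nhds_iff.mp hWnhds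
  set V : Set ℂ := ball z₀ ε with hV
  have hVsub : V ⊆ {z : ℂ | z ∈ ball (0:ℂ) 1 ∧ z ≠ 0 ∧ 0 < (u z / c).re} := hball
  set L : ℂ → ℂ := fun z => Complex.log (u z / c) + Complex.log c with hL
  set q : ℂ → ℂ := fun z => ψ z * Complex.exp (-((α:ℂ) * L z)) with hq
  have hz₀V : z₀ ∈ V := mem_ball_self hε
  have hune : ∀ z ∈ V, u z ≠ 0 := fun z hz => hfz z (hVsub hz).1 (hVsub hz).2.1
  have huc : ∀ z ∈ V, u z / c ≠ 0 := fun z hz => div_ne_zero (hune z hz) hc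
  have hnormq : ∀ z ∈ V, ‖q z‖ = 1 := by
    intro z hz
    rw [hq]; dsimp only
    rw [norm_mul, hψf z (hVsub hz).1 (hVsub hz).2.1]
    have hupos : 0 < ‖u z‖ := norm_pos_iff.mpr (hune z hz)
    have h1 : ‖(u z) ^ (α:ℂ)‖ = ‖u z‖ ^ α := by
      rw [Complex.norm_cpow_of_ne_zero (hune z hz)]
      simp
    have h2 : (L z).re = Real.log ‖u z‖ := by
      rw [hL]; dsimp only
      rw [Complex.add_re, Complex.log_re, Complex.log_re, norm_div]
      rw [Real.log_div (norm_ne_zero_iff.mpr (hune z hz)) (norm_ne_zero_iff.mpr hc)]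
      ring
    have h3 : (-((α:ℂ) * L z)).re = -(α * (L z).re) := by
      rw [Complex.neg_re, Complex.re_ofReal_mul]
    rw [h1, Complex.norm_exp, h3, h2]
    rw [Real.rpow_def_of_pos hupos, ← Real.exp_add,
      show Real.log ‖u z‖ * α + -(α * Real.log ‖u z‖) = 0 by ring,
      Real.exp_zero]
  have hqdiff : DifferentiableOn ℂ q V := by
    intro z hz
    apply DifferentiableAt.differentiableWithinAt
    have hfd : DifferentiableAt ℂ f z := (hf z (hVsub hz).1).differentiableAt
    have hud : DifferentiableAt ℂ u z := by
      rw [hu]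
      exact hfd.div differentiableAt_id (hVsub hz).2.1
    have hslit : u z / c ∈ Complex.slitPlane := Or.inl (hVsub hz).2.2
    have hLd : DifferentiableAt ℂ L z := by
      rw [hL]
      exact ((hud.div_const c).clog hslit).add_const _
    exact ((hψ z (hVsub hz).1).differentiableAt).mul (((hLd.const_mul _).neg).cexp)
  have hqconst : Set.EqOn q (Function.const ℂ (q z₀)) V := by
    apply Complex.eqOn_of_isPreconnected_of_isMaxOn_norm (convex_ball z₀ ε).isPreconnected
      isOpen_ball hqdiff hz₀V
    intro x hx
    simp only [Set.mem_setOf_eq, Function.comp_apply]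
    rw [hnormq x hx, hnormq z₀ hz₀V]
  have hψeq : ∀ z ∈ V, ψ z = q z₀ * Complex.exp ((α:ℂ) * L z) := by
    intro z hz
    have h5 : ψ z = q z * Complex.exp ((α:ℂ) * L z) := by
      rw [hq]; dsimp only
      rw [mul_assoc, ← Complex.exp_add]
      simp
    rw [h5, hqconst hz]
    rfl
  have hfd : HasDerivAt f (deriv f z₀) z₀ := (hf z₀ hz₀).differentiableAt.hasDerivAt
  have hud : HasDerivAt u ((deriv f z₀ * z₀ - f z₀ * 1) / z₀ ^ 2) z₀ := by
    rw [hu]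
    exact hfd.div (hasDerivAt_id z₀) hz0
  set u' : ℂ := (deriv f z₀ * z₀ - f z₀ * 1) / z₀ ^ 2 with hu'
  have hslit0 : u z₀ / c ∈ Complex.slitPlane := Or.inl (hVsub hz₀V).2.2
  have hLder : HasDerivAt L ((u' / c) / (u z₀ / c)) z₀ := by
    rw [hL]
    exact ((hud.div_const c).clog hslit0).add_const _
  have hg : HasDerivAt (fun z => q z₀ * Complex.exp ((α:ℂ) * L z))
      (q z₀ * (Complex.exp ((α:ℂ) * L z₀) * ((α:ℂ) * ((u' / c) / (u z₀ / c))))) z₀ :=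
    ((hLder.const_mul ((α:ℂ))).cexp).const_mul (q z₀)
  have hψev : ψ =ᶠ[nhds z₀] fun z => q z₀ * Complex.exp ((α:ℂ) * L z) :=
    Filter.eventually_of_mem (isOpen_ball.mem_nhds hz₀V) hψeq
  have hψz₀ : ψ z₀ = q z₀ * Complex.exp ((α:ℂ) * L z₀) := hψeq z₀ hz₀V
  have hdψ : deriv ψ z₀ = ψ z₀ * ((α:ℂ) * ((u' / c) / (u z₀ / c))) := by
    rw [hψev.deriv_eq, hg.deriv, hψz₀]
    ring
  rw [hdψ, hψf z₀ hz₀ hz0]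
  rw [show ((α:ℂ) - 1) = ((α:ℂ) - (1:ℂ)) by norm_num,
    Complex.cpow_sub _ _ (hfz z₀ hz₀ hz0), Complex.cpow_one]
  have huz : u z₀ = f z₀ / z₀ := by rw [hu]
  rw [hu', ← hcdef] at *
  rw [hcdef, huz]
  field_simp
  ring

/-- for `f ∈ B₁(α)` with `ψ = (f/z)^α`, the coefficients of `ψ` are dominated
by those of `G(z) = 1 + Σ (2α/(n+α)) zⁿ`, and `zψ' + αψ` is subordinate to
`zG' + αG = α(1+z)/(1-z)`. -/
theorem bazilevic_domination_subordination
    (α : ℝ) (hα : 0 < α)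
    (f ψ G : ℂ → ℂ)
    (hf : AnalyticOn ℂ f (ball 0 1))
    (hf0 : f 0 = 0) (hf'0 : deriv f 0 = 1)
    (hfz : ∀ z ∈ ball (0:ℂ) 1, z ≠ 0 → f z / z ≠ 0)
    (hRe : ∀ z ∈ ball (0:ℂ) 1, z ≠ 0 →
      0 < (((f z / z) ^ ((α : ℂ) - 1)) * deriv f z).re)
    (hψ : AnalyticOn ℂ ψ (ball 0 1))
    (hψ0 : ψ 0 = 1)
    (hψf : ∀ z ∈ ball (0:ℂ) 1, z ≠ 0 → ψ z = (f z / z) ^ (α : ℂ))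
    (hG : ∀ z ∈ ball (0:ℂ) 1,
      G z = 1 + ∑' n : ℕ, ((2 * α / ((n + 1) + α) : ℝ) : ℂ) * z ^ (n + 1)) :
    (∀ n : ℕ, 1 ≤ n →
      ‖iteratedDeriv n ψ 0 / (n.factorial : ℂ)‖ ≤ 2 * α / (n + α)) ∧
    (∀ z ∈ ball (0:ℂ) 1,
      z * deriv G z + (α : ℂ) * G z = (α : ℂ) * (1 + z) / (1 - z)) ∧
    (∃ ω : ℂ → ℂ, AnalyticOn ℂ ω (ball 0 1) ∧ ω 0 = 0 ∧
      (∀ z ∈ ball (0:ℂ) 1, ω z ∈ ball (0:ℂ) 1) ∧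
      ∀ z ∈ ball (0:ℂ) 1,
        z * deriv ψ z + (α : ℂ) * ψ z = (α : ℂ) * (1 + ω z) / (1 - ω z)) := by
  have hψN : AnalyticOnNhd ℂ ψ (ball 0 1) := (isOpen_ball.analyticOn_iff_analyticOnNhd).mp hψ
  have hfN : AnalyticOnNhd ℂ f (ball 0 1) := (isOpen_ball.analyticOn_iff_analyticOnNhd).mp hf
  set h : ℂ → ℂ := fun z => z * deriv ψ z + (α:ℂ) * ψ z with hh
  have hident : ∀ z ∈ ball (0:ℂ) 1, z ≠ 0 →
      h z = (α:ℂ) * (((f z / z) ^ ((α:ℂ)-1)) * deriv f z) :=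
    fun z hz h0 => deriv_ident α f ψ hfN hψN hfz hψf hz h0
  have hhana : AnalyticOnNhd ℂ h (ball 0 1) := by
    apply AnalyticOnNhd.add
    · exact (analyticOnNhd_id).mul (hψN.deriv)
    · exact (analyticOnNhd_const).mul hψN
  have hh0 : h 0 = (α:ℂ) := by
    rw [hh]
    simp [hψ0]
  have hpos : ∀ z ∈ ball (0:ℂ) 1, 0 < (h z).re := by
    intro z hz
    by_cases h0 : z = 0
    · subst h0
      rw [hh0]
      simpa using hα
    · rw [hident z hz h0, Complex.re_ofReal_mul]
      exact mul_pos hα (hRe z hz h0)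
  refine ⟨?_, ?_, ?_⟩
  · -- part 1
    intro n hn
    exact coeff_bound α hα ψ hψN.differentiableOn hhana.continuousOn hψ0
      (fun z hz => (hpos z hz).le) n hn
  · -- part 2
    intro z hz
    have hz1 : ‖z‖ < 1 := mem_ball_zero_iff.mp hz
    set r : ℝ := (‖z‖ + 1)/2 with hrdef
    have hr1 : r < 1 := by rw [hrdef]; linarith
    have hr0 : 0 < r := by rw [hrdef]; linarith [norm_nonneg z]
    have hzr : ‖z‖ < r := by rw [hrdef]; linarith
    have hzr' : z ∈ ball (0:ℂ) r := mem_ball_zero_iff.mpr hzr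
    set b : ℕ → ℝ := fun n => 2 * α / ((n + 1) + α) with hb
    have hbpos : ∀ n : ℕ, 0 < (n:ℝ) + 1 + α := fun n => by positivity
    have hble : ∀ n : ℕ, 0 ≤ b n ∧ b n ≤ 2*α := by
      intro n
      constructor
      · rw [hb]; positivity
      · rw [hb]
        dsimp only
        apply div_le_self (by positivity)
        have := Nat.cast_nonneg (α := ℝ) n
        linarith
    have hu : Summable (fun n : ℕ => 2*α*(((n:ℝ)+1) * r^n)) := by
      apply Summable.mul_left
      have h1 : Summable (fun n : ℕ => (n:ℝ) * r^n) := by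
        have := summable_pow_mul_geometric_of_norm_lt_one 1 (r := r)
          (by rwa [Real.norm_eq_abs, _root_.abs_of_pos hr0])
        simpa using this
      have h2 : Summable (fun n : ℕ => r^n) := summable_geometric_of_lt_one hr0.le hr1
      simpa [add_mul] using h1.add h2
    have hgd : ∀ (n : ℕ) (y : ℂ),
        HasDerivAt (fun y : ℂ => ((b n : ℝ):ℂ) * y^(n+1)) (((b n : ℝ):ℂ) * ((n:ℂ)+1) * y^n) y := by
      intro n y
      have := (hasDerivAt_pow (n+1) y).const_mul (((b n : ℝ)):ℂ)
      have e : ((b n : ℝ):ℂ) * ((n:ℂ)+1) * y^n = ((b n : ℝ):ℂ) * (((n+1:ℕ):ℂ) * y^(n+1-1)) := by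
        rw [Nat.add_sub_cancel]; push_cast; ring
      rw [e]; exact this
    have hsum0 : Summable (fun n : ℕ => ((b n : ℝ):ℂ) * (0:ℂ)^(n+1)) := by
      have : (fun n : ℕ => ((b n : ℝ):ℂ) * (0:ℂ)^(n+1)) = fun _ => 0 := by
        funext n; simp
      rw [this]
      exact summable_zero
    have hS : HasDerivAt (fun y : ℂ => ∑' n : ℕ, ((b n : ℝ):ℂ) * y^(n+1))
        (∑' n : ℕ, ((b n : ℝ):ℂ) * ((n:ℂ)+1) * z^n) z := by
      apply hasDerivAt_tsum_of_isPreconnected hu isOpen_ball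
        (convex_ball (0:ℂ) r).isPreconnected
        (fun n y _ => hgd n y) _ (mem_ball_self hr0) hsum0 hzr'
      intro n y hy
      rw [norm_mul, norm_mul, norm_pow]
      have h1 : ‖((b n : ℝ):ℂ)‖ ≤ 2*α := by
        rw [Complex.norm_real, Real.norm_eq_abs, _root_.abs_of_nonneg (hble n).1]
        exact (hble n).2
      have h2 : ‖(n:ℂ)+1‖ = (n:ℝ)+1 := by
        rw [show ((n:ℂ)+1) = (((n:ℝ)+1 : ℝ):ℂ) by push_cast; ring]
        rw [Complex.norm_real, Real.norm_eq_abs, _root_.abs_of_pos (by positivity)]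
      rw [h2]
      have h3 : ‖y‖^n ≤ r^n := pow_le_pow_left₀ (norm_nonneg y) (mem_ball_zero_iff.mp hy).le n
      calc ‖((b n : ℝ):ℂ)‖ * ((n:ℝ)+1) * ‖y‖^n ≤ (2*α) * (((n:ℝ)+1) * r^n) := by
            rw [mul_assoc]
            apply mul_le_mul h1 _ (by positivity) (by positivity)
            apply mul_le_mul_of_nonneg_left h3 (by positivity)
        _ = 2*α*(((n:ℝ)+1) * r^n) := by ring
    have hGev : G =ᶠ[nhds z] fun y => 1 + ∑' n : ℕ, ((b n : ℝ):ℂ) * y^(n+1) := by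
      apply Filter.eventually_of_mem (isOpen_ball.mem_nhds hz)
      intro w hw
      exact hG w hw
    have hdG : deriv G z = ∑' n : ℕ, ((b n : ℝ):ℂ) * ((n:ℂ)+1) * z^n := by
      rw [hGev.deriv_eq]
      exact (hS.const_add 1).deriv
    rw [hdG, hG z hz]
    -- summabilities at z
    have hSb : Summable (fun n : ℕ => ((b n : ℝ):ℂ) * ((n:ℂ)+1) * z^n) := by
      apply Summable.of_norm
      apply Summable.of_nonneg_of_le (fun n => by positivity) _ hu
      intro n
      rw [norm_mul, norm_mul, norm_pow]
      have h1 : ‖((b n : ℝ):ℂ)‖ ≤ 2*α := by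
        rw [Complex.norm_real, Real.norm_eq_abs, _root_.abs_of_nonneg (hble n).1]
        exact (hble n).2
      have h2 : ‖(n:ℂ)+1‖ = (n:ℝ)+1 := by
        rw [show ((n:ℂ)+1) = (((n:ℝ)+1 : ℝ):ℂ) by push_cast; ring]
        rw [Complex.norm_real, Real.norm_eq_abs, _root_.abs_of_pos (by positivity)]
      rw [h2]
      have h3 : ‖z‖^n ≤ r^n := pow_le_pow_left₀ (norm_nonneg z) hzr.le n
      calc ‖((b n : ℝ):ℂ)‖ * ((n:ℝ)+1) * ‖z‖^n ≤ (2*α) * (((n:ℝ)+1) * r^n) := by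
            rw [mul_assoc]
            apply mul_le_mul h1 _ (by positivity) (by positivity)
            apply mul_le_mul_of_nonneg_left h3 (by positivity)
        _ = 2*α*(((n:ℝ)+1) * r^n) := by ring
    have hSa : Summable (fun n : ℕ => (α:ℂ) * (((b n : ℝ):ℂ) * z^(n+1))) := by
      apply Summable.mul_left
      apply Summable.of_norm
      apply Summable.of_nonneg_of_le (fun n => by positivity) _ hu
      intro n
      rw [norm_mul, norm_pow]
      have h1 : ‖((b n : ℝ):ℂ)‖ ≤ 2*α := by
        rw [Complex.norm_real, Real.norm_eq_abs, _root_.abs_of_nonneg (hble n).1]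
        exact (hble n).2
      have h3 : ‖z‖^(n+1) ≤ 1 * (((n:ℝ)+1) * r^n) := by
        have : ‖z‖^(n+1) ≤ r^(n+1) := pow_le_pow_left₀ (norm_nonneg z) hzr.le (n+1)
        have h4 : r^(n+1) ≤ r^n := pow_le_pow_of_le_one hr0.le hr1.le (by omega)
        have h5 : (1:ℝ) ≤ (n:ℝ)+1 := by have := Nat.cast_nonneg (α := ℝ) n; linarith
        nlinarith [pow_nonneg hr0.le n]
      calc ‖((b n : ℝ):ℂ)‖ * ‖z‖^(n+1) ≤ (2*α) * (1 * (((n:ℝ)+1) * r^n)) := by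
            apply mul_le_mul h1 h3 (by positivity) (by positivity)
        _ = 2*α*(((n:ℝ)+1) * r^n) := by ring
    have e1 : z * ∑' n : ℕ, ((b n : ℝ):ℂ) * ((n:ℂ)+1) * z^n
        = ∑' n : ℕ, ((b n : ℝ):ℂ) * ((n:ℂ)+1) * z^(n+1) := by
      rw [← tsum_mul_left]
      apply tsum_congr
      intro n
      rw [pow_succ]
      ring
    have e2 : (α:ℂ) * (1 + ∑' n : ℕ, ((b n : ℝ):ℂ) * z^(n+1))
        = (α:ℂ) + ∑' n : ℕ, (α:ℂ) * (((b n : ℝ):ℂ) * z^(n+1)) := by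
      rw [mul_add, mul_one, ← tsum_mul_left]
    rw [e1, e2]
    have hSb' : Summable (fun n : ℕ => ((b n : ℝ):ℂ) * ((n:ℂ)+1) * z^(n+1)) := by
      have : (fun n : ℕ => ((b n : ℝ):ℂ) * ((n:ℂ)+1) * z^(n+1))
          = fun n : ℕ => z * (((b n : ℝ):ℂ) * ((n:ℂ)+1) * z^n) := by
        funext n; rw [pow_succ]; ring
      rw [this]
      exact hSb.mul_left z
    have e3 : ∑' n : ℕ, ((b n : ℝ):ℂ) * ((n:ℂ)+1) * z^(n+1)
        + ∑' n : ℕ, (α:ℂ) * (((b n : ℝ):ℂ) * z^(n+1))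
        = ∑' n : ℕ, (2*α:ℝ) * z^(n+1) := by
      rw [← Summable.tsum_add hSb' hSa]
      apply tsum_congr
      intro n
      have hkey : (((n:ℂ)+1) + (α:ℂ)) * ((b n : ℝ):ℂ) = ((2*α : ℝ):ℂ) := by
        have : (((n:ℝ)+1) + α) * b n = 2*α := by
          rw [hb]
          dsimp only
          field_simp
        calc (((n:ℂ)+1) + (α:ℂ)) * ((b n : ℝ):ℂ) = (((((n:ℝ)+1) + α) * b n : ℝ) : ℂ) := by
              push_cast; ring
          _ = ((2*α : ℝ):ℂ) := by rw [this]
      calc ((b n : ℝ):ℂ) * ((n:ℂ)+1) * z^(n+1) + (α:ℂ) * (((b n : ℝ):ℂ) * z^(n+1))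
          = ((((n:ℂ)+1) + (α:ℂ)) * ((b n : ℝ):ℂ)) * z^(n+1) := by ring
        _ = ((2*α : ℝ):ℂ) * z^(n+1) := by rw [hkey]
    rw [add_comm ((α:ℂ)) _, ← add_assoc, e3]
    have e4 : ∑' n : ℕ, ((2*α:ℝ):ℂ) * z^(n+1) = ((2*α:ℝ):ℂ) * (z * (1-z)⁻¹) := by
      rw [tsum_mul_left]
      congr 1
      have : (fun n : ℕ => z^(n+1)) = fun n : ℕ => z * z^n := by
        funext n; rw [pow_succ]; ring
      rw [this, tsum_mul_left, tsum_geometric_of_norm_lt_one hz1]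
    rw [e4]
    have hz1' : (1:ℂ) - z ≠ 0 := by
      intro hzz
      have : z = 1 := by linear_combination -hzz
      rw [this] at hz1
      simp at hz1
    field_simp
    push_cast
    ring
  · -- part 3
    have hden : ∀ z ∈ ball (0:ℂ) 1, h z + (α:ℂ) ≠ 0 := by
      intro z hz heq
      have h2 : (h z + (α:ℂ)).re = 0 := by rw [heq]; simp
      rw [Complex.add_re, Complex.ofReal_re] at h2
      linarith [hpos z hz]
    refine ⟨fun z => (h z - (α:ℂ)) / (h z + (α:ℂ)), ?_, ?_, ?_, ?_⟩
    · exact ((hhana.sub analyticOnNhd_const).div (hhana.add analyticOnNhd_const) hden).analyticOn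
    · dsimp only
      rw [hh0]
      simp
    · intro z hz
      rw [mem_ball_zero_iff, norm_div]
      have hre := hpos z hz
      have e1 : ‖h z - (α:ℂ)‖^2 = ((h z).re - α)^2 + ((h z).im)^2 := by
        rw [Complex.sq_norm, Complex.normSq_apply]
        simp only [Complex.sub_re, Complex.sub_im, Complex.ofReal_re, Complex.ofReal_im]
        ring
      have e2 : ‖h z + (α:ℂ)‖^2 = ((h z).re + α)^2 + ((h z).im)^2 := by
        rw [Complex.sq_norm, Complex.normSq_apply]
        simp only [Complex.add_re, Complex.add_im, Complex.ofReal_re, Complex.ofReal_im]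
        ring
      have hlt : ‖h z - (α:ℂ)‖^2 < ‖h z + (α:ℂ)‖^2 := by
        rw [e1, e2]
        nlinarith [hα, hre]
      have key : ‖h z - (α:ℂ)‖ < ‖h z + (α:ℂ)‖ :=
        lt_of_pow_lt_pow_left₀ 2 (norm_nonneg _) hlt
      have hd0 : 0 < ‖h z + (α:ℂ)‖ := lt_of_le_of_lt (norm_nonneg _) key
      rw [div_lt_one hd0]
      exact key
    · intro z hz
      have hd := hden z hz
      have hαne : (α:ℂ) ≠ 0 := Complex.ofReal_ne_zero.mpr hα.ne'
      have e1 : (1 + (h z - (α:ℂ))/(h z + (α:ℂ))) = 2 * h z / (h z + (α:ℂ)) := by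
        field_simp
        ring
      have e2 : (1 - (h z - (α:ℂ))/(h z + (α:ℂ))) = 2 * (α:ℂ) / (h z + (α:ℂ)) := by
        field_simp
        ring
      show h z = _
      rw [e1, e2]
      field_simp

end Main
end
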